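/- arXiv:2010.11756 — 9 statements merged into one kernel-verified Lean document; each statement's English description precedes it below -/
import Mathlib

section
/- If b = 5m·2^n for some odd integer m > 1 and some integer n ≥ 0, then M_b = n + 2. -/
/-- The four base-`b` digits of `x` (viewed as a 4-digit string with leading
zeros allowed), sorted in decreasing order. -/
def sortedDigits (b x : ℕ) : List ℕ :=
  List.insertionSort (· ≥ ·) [x % b, x / b % b, x / b ^ 2 % b, x / b ^ 3 % b]

/-- The 4-digit base-`b` Kaprekar function `K_b(x) = D - A`. -/
def Kap (b x : ℕ) : ℕ :=
  let l := sortedDigits b x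
  (l[0]! * b ^ 3 + l[1]! * b ^ 2 + l[2]! * b + l[3]!) -
    (l[3]! * b ^ 3 + l[2]! * b ^ 2 + l[1]! * b + l[0]!)

/-- The difference pair `(a₃ - a₀, a₂ - a₁)` of a 4-digit base-`b` input. -/
def diffPair (b x : ℕ) : ℕ × ℕ :=
  let l := sortedDigits b x
  (l[0]! - l[3]!, l[1]! - l[2]!)

/-- `S_b`: the set of 4-digit base-`b` inputs whose sequence of Kaprekar
iterates is eventually constant and nonzero. -/
def KapSet (b : ℕ) : Set ℕ :=
  {x | x < b ^ 4 ∧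
    ∃ t, (∀ s, t ≤ s → (Kap b)^[s] x = (Kap b)^[t] x) ∧ (Kap b)^[t] x ≠ 0}

/-- Arrange the two coordinates of a pair in decreasing order. -/
def sort2 (p : ℕ × ℕ) : ℕ × ℕ := (max p.1 p.2, min p.1 p.2)

/-- A base-`b` difference pair: `b - 1 ≥ d ≥ d' ≥ 0`. -/
def IsDiffPair (b : ℕ) (p : ℕ × ℕ) : Prop := p.2 ≤ p.1 ∧ p.1 ≤ b - 1

/-- The Kaprekar map on base-`b` difference pairs. -/
def Kpair (b : ℕ) (p : ℕ × ℕ) : ℕ × ℕ :=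
  if p.1 = 0 ∧ p.2 = 0 then (0, 0)
  else if p.2 = 0 then
    -- type (c)
    sort2 (p.1 - 1, b - p.1)
  else if p.1 = p.2 ∨ p.1 + p.2 = b then
    -- type (b)
    sort2 ((2 * (p.1 : ℤ) - ((b : ℤ) - 1)).natAbs,
           (2 * (p.1 : ℤ) - ((b : ℤ) + 1)).natAbs)
  else
    -- type (a)
    sort2 ((2 * (p.1 : ℤ) - (b : ℤ)).natAbs, (2 * (p.2 : ℤ) - (b : ℤ)).natAbs)

/-! ### Digit infrastructure -/

def NN (b d d' : ℕ) : ℕ := d * (b^3 - 1) + d' * (b^2 - b)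

theorem digits4 {b a0 a1 a2 a3 x : ℕ} (hb : 0 < b) (h0 : a0 < b) (h1 : a1 < b)
    (h2 : a2 < b) (h3 : a3 < b) (hx : x = a3*b^3 + a2*b^2 + a1*b + a0) :
    x % b = a0 ∧ x / b % b = a1 ∧ x / b ^ 2 % b = a2 ∧ x / b ^ 3 % b = a3 := by
  have e1 : x = b*(a3*b^2 + a2*b + a1) + a0 := by rw [hx]; ring
  have d1 : x / b = a3*b^2 + a2*b + a1 := by
    rw [e1, Nat.mul_add_div hb, Nat.div_eq_of_lt h0]; omega
  have e2 : x = b^2*(a3*b + a2) + (a1*b + a0) := by rw [hx]; ring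
  have lt2 : a1*b + a0 < b^2 := by nlinarith
  have d2 : x / b^2 = a3*b + a2 := by
    rw [e2, Nat.mul_add_div (by positivity), Nat.div_eq_of_lt lt2]; omega
  have e3 : x = b^3*a3 + (a2*b^2 + a1*b + a0) := by rw [hx]; ring
  have lt3 : a2*b^2 + a1*b + a0 < b^3 := by nlinarith
  have d3 : x / b^3 = a3 := by
    rw [e3, Nat.mul_add_div (by positivity), Nat.div_eq_of_lt lt3]; omega
  refine ⟨?_, ?_, ?_, ?_⟩
  · rw [e1, Nat.mul_add_mod, Nat.mod_eq_of_lt h0]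
  · rw [d1]; rw [show a3*b^2 + a2*b + a1 = b*(a3*b+a2) + a1 by ring,
      Nat.mul_add_mod, Nat.mod_eq_of_lt h1]
  · rw [d2, show a3*b + a2 = b*a3 + a2 by ring, Nat.mul_add_mod, Nat.mod_eq_of_lt h2]
  · rw [d3, Nat.mod_eq_of_lt h3]

theorem sortedDigits_of_digits {b a0 a1 a2 a3 x : ℕ} (hb : 0 < b) (h0 : a0 < b) (h1 : a1 < b)
    (h2 : a2 < b) (h3 : a3 < b) (hx : x = a3*b^3 + a2*b^2 + a1*b + a0) :
    sortedDigits b x = List.insertionSort (· ≥ ·) [a0, a1, a2, a3] := by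
  obtain ⟨e0, e1, e2, e3⟩ := digits4 hb h0 h1 h2 h3 hx
  rw [sortedDigits, e0, e1, e2, e3]

theorem sortedDigits_spec (b x : ℕ) (hb : 0 < b) :
    ∃ l0 l1 l2 l3, sortedDigits b x = [l0,l1,l2,l3] ∧ l3 ≤ l2 ∧ l2 ≤ l1 ∧ l1 ≤ l0 ∧
      l0 < b ∧ l1 < b ∧ l2 < b ∧ l3 < b := by
  have hperm : (sortedDigits b x).Perm [x % b, x / b % b, x / b ^ 2 % b, x / b ^ 3 % b] :=
    List.perm_insertionSort _ _
  have hsort : List.Pairwise (· ≥ ·) (sortedDigits b x) :=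
    List.pairwise_insertionSort _ _
  have hlen : (sortedDigits b x).length = 4 := by simpa using hperm.length_eq
  have hmem : ∀ t ∈ sortedDigits b x, t < b := by
    intro t ht
    have := hperm.mem_iff.mp ht
    simp only [List.mem_cons, List.not_mem_nil, or_false] at this
    rcases this with h|h|h|h <;> rw [h] <;> exact Nat.mod_lt _ hb
  rcases e : sortedDigits b x with _|⟨l0,_|⟨l1,_|⟨l2,_|⟨l3,_|⟨l4,tl⟩⟩⟩⟩⟩ <;>
    rw [e] at hlen <;> simp at hlen
  rw [e] at hsort hmem
  simp only [List.pairwise_cons, List.mem_cons, List.not_mem_nil, or_false, ge_iff_le] at hsort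
  refine ⟨l0, l1, l2, l3, rfl, ?_, ?_, ?_, ?_, ?_, ?_, ?_⟩
  · exact hsort.2.2.1 l3 (by simp)
  · exact hsort.2.1 l2 (Or.inl rfl)
  · exact hsort.1 l1 (Or.inl rfl)
  · exact hmem l0 (by simp)
  · exact hmem l1 (by simp)
  · exact hmem l2 (by simp)
  · exact hmem l3 (by simp)

theorem Kap_spec (b x : ℕ) (hb : 0 < b) :
    Kap b x = NN b (diffPair b x).1 (diffPair b x).2 ∧
    (diffPair b x).2 ≤ (diffPair b x).1 ∧ (diffPair b x).1 ≤ b - 1 := by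
  obtain ⟨l0, l1, l2, l3, e, h32, h21, h10, m0, m1, m2, m3⟩ := sortedDigits_spec b x hb
  rw [Kap, diffPair, e]
  simp only [List.getElem!_cons_zero, List.getElem!_cons_succ]
  refine ⟨?_, by omega, by omega⟩
  have hb3 : 1 ≤ b^3 := Nat.one_le_pow _ _ hb
  have hb2 : b ≤ b^2 := Nat.le_self_pow (by norm_num) b
  have h30 : l3 ≤ l0 := by omega
  have hBA : l3*b^3+l2*b^2+l1*b+l0 ≤ l0*b^3+l1*b^2+l2*b+l3 := by nlinarith
  rw [NN]
  zify [hBA, h30, h21, hb3, hb2]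
  ring

theorem rot4 {α : Type*} {a b c d : α} : [a,b,c,d].Perm [b,c,d,a] :=
  List.perm_append_comm (l₁ := [a]) (l₂ := [b,c,d])
theorem sw4 {α : Type*} {a b c d : α} : [a,b,c,d].Perm [b,a,c,d] := List.Perm.swap _ _ _

theorem sort4 {w x y z a0 a1 a2 a3 : ℕ} (hp : [w,x,y,z].Perm [a0,a1,a2,a3])
    (h1 : a1 ≤ a0) (h2 : a2 ≤ a1) (h3 : a3 ≤ a2) :
    List.insertionSort (· ≥ ·) [w,x,y,z] = [a0,a1,a2,a3] := by
  apply List.Perm.eq_of_pairwise' (r := (· ≥ ·)) ?_ ?_ ((List.perm_insertionSort _ _).trans hp)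
  · exact List.pairwise_insertionSort _ _
  · simp only [List.pairwise_cons, List.mem_cons, List.mem_singleton, List.Pairwise.nil, ge_iff_le]
    refine ⟨fun t ht => ?_, fun t ht => ?_, fun t ht => ?_, fun t ht => ?_, trivial⟩ <;>
      simp at ht <;> omega

theorem diffPair_digits {b a0 a1 a2 a3 x s0 s1 s2 s3 : ℕ} (hb : 0 < b)
    (h0 : a0 < b) (h1 : a1 < b) (h2 : a2 < b) (h3 : a3 < b)
    (hx : x = a3*b^3 + a2*b^2 + a1*b + a0)
    (hp : [a0,a1,a2,a3].Perm [s0,s1,s2,s3])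
    (o1 : s1 ≤ s0) (o2 : s2 ≤ s1) (o3 : s3 ≤ s2) :
    diffPair b x = (s0 - s3, s1 - s2) := by
  rw [diffPair, sortedDigits_of_digits hb h0 h1 h2 h3 hx, sort4 hp o1 o2 o3]
  simp only [List.getElem!_cons_zero, List.getElem!_cons_succ]

theorem perm_a1 (p0 p1 p2 p3 : ℕ) : [p0,p1,p2,p3].Perm [p3,p1,p2,p0] :=
  ((((((List.Perm.refl _).trans rot4).trans rot4).trans rot4).trans sw4).trans rot4)
theorem perm_a2 (p0 p1 p2 p3 : ℕ) : [p0,p1,p2,p3].Perm [p3,p2,p1,p0] :=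
  (((((List.Perm.refl _).trans sw4).trans rot4).trans rot4).trans sw4)
theorem perm_a3 (p0 p1 p2 p3 : ℕ) : [p0,p1,p2,p3].Perm [p1,p3,p0,p2] :=
  ((((List.Perm.refl _).trans rot4).trans sw4).trans rot4)
theorem perm_a4 (p0 p1 p2 p3 : ℕ) : [p0,p1,p2,p3].Perm [p1,p0,p3,p2] :=
  (((((((List.Perm.refl _).trans rot4).trans rot4).trans sw4).trans rot4).trans rot4).trans sw4)
theorem perm_b1 (p0 p1 p2 p3 : ℕ) : [p0,p1,p2,p3].Perm [p3,p2,p0,p1] :=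
  ((((List.Perm.refl _).trans rot4).trans rot4).trans sw4)
theorem perm_b2 (p0 p1 p2 p3 : ℕ) : [p0,p1,p2,p3].Perm [p3,p0,p1,p2] :=
  ((((List.Perm.refl _).trans rot4).trans rot4).trans rot4)
theorem perm_b3 (p0 p1 p2 p3 : ℕ) : [p0,p1,p2,p3].Perm [p0,p1,p3,p2] :=
  ((((((List.Perm.refl _).trans rot4).trans rot4).trans sw4).trans rot4).trans rot4)
theorem perm_bii (p0 p1 p2 p3 : ℕ) : [p0,p1,p2,p3].Perm [p3,p1,p0,p2] :=
  (((((List.Perm.refl _).trans rot4).trans sw4).trans rot4).trans sw4)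
theorem perm_c1 (p0 p1 p2 p3 : ℕ) : [p0,p1,p2,p3].Perm [p1,p2,p3,p0] :=
  ((List.Perm.refl _).trans rot4)
theorem perm_c2 (p0 p1 p2 p3 : ℕ) : [p0,p1,p2,p3].Perm [p1,p2,p0,p3] :=
  (((((((List.Perm.refl _).trans rot4).trans rot4).trans rot4).trans sw4).trans rot4).trans rot4)

theorem diffPair_NN (b d d' : ℕ) (hb : 15 ≤ b) (h1 : d' ≤ d) (h2 : d ≤ b - 1) :
    diffPair b (NN b d d') = Kpair b (d, d') := by
  have hb0 : 0 < b := by omega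
  have hb3 : 1 ≤ b^3 := Nat.one_le_pow _ _ hb0
  have hb2 : b ≤ b^2 := Nat.le_self_pow (by norm_num) b
  rcases Nat.eq_zero_or_pos d with hd0 | hd1
  · -- d = d' = 0
    have hd'0 : d' = 0 := by omega
    subst hd0; subst hd'0
    have hx : NN b 0 0 = 0 := by rw [NN]; ring
    rw [hx, Kpair, if_pos (by constructor <;> rfl)]
    rw [diffPair, sortedDigits]
    norm_num [List.insertionSort, List.orderedInsert]
  rcases Nat.eq_zero_or_pos d' with hd'0 | hd'1
  · -- type (c) : d ≥ 1, d' = 0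
    subst hd'0
    have hx : NN b d 0 = (d-1)*b^3 + (b-1)*b^2 + (b-1)*b + (b-d) := by
      rw [NN]
      zify [hb3, hb2, hd1, (show d ≤ b by omega), (show 1 ≤ b by omega)]
      ring
    rcases le_total (b - d) (d - 1) with hc | hc
    · have e := diffPair_digits hb0 (by omega) (by omega) (by omega) (by omega) hx
        (perm_c1 _ _ _ _) (by omega) (by omega) (by omega)
      rw [e, Kpair, if_neg (by omega), if_pos rfl]
      simp only [sort2, Prod.mk.injEq]
      constructor <;> omega
    · have e := diffPair_digits hb0 (by omega) (by omega) (by omega) (by omega) hx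
        (perm_c2 _ _ _ _) (by omega) (by omega) (by omega)
      rw [e, Kpair, if_neg (by omega), if_pos rfl]
      simp only [sort2, Prod.mk.injEq]
      constructor <;> omega
  · -- d ≥ d' ≥ 1
    have hx : NN b d d' = d*b^3 + (d'-1)*b^2 + (b-1-d')*b + (b-d) := by
      rw [NN]
      zify [hb3, hb2, hd'1, (show d ≤ b by omega), (show 1 ≤ b by omega),
        (show d' ≤ b - 1 by omega), (show 1 ≤ b - 1 by omega)]
      ring
    have h0 : b - d < b := by omega
    have ha1 : b - 1 - d' < b := by omega
    have ha2 : d' - 1 < b := by omega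
    have ha3 : d < b := by omega
    by_cases hbb : d = d' ∨ d + d' = b
    · -- type (b)
      have hKp : Kpair b (d, d') = sort2 ((2 * (d : ℤ) - ((b : ℤ) - 1)).natAbs,
          (2 * (d : ℤ) - ((b : ℤ) + 1)).natAbs) := by
        rw [Kpair, if_neg (by omega), if_neg (by omega), if_pos hbb]
      by_cases hdd : d = d'
      · subst hdd
        rcases Nat.lt_trichotomy (2*d) b with h2d | h2d | h2d
        · have e := diffPair_digits hb0 h0 ha1 ha2 ha3 hx
            (perm_b3 _ _ _ _) (by omega) (by omega) (by omega)
          rw [e, hKp]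
          simp only [sort2, Prod.mk.injEq]
          constructor <;> omega
        · have e := diffPair_digits hb0 h0 ha1 ha2 ha3 hx
            (perm_b2 _ _ _ _) (by omega) (by omega) (by omega)
          rw [e, hKp]
          simp only [sort2, Prod.mk.injEq]
          constructor <;> omega
        · have e := diffPair_digits hb0 h0 ha1 ha2 ha3 hx
            (perm_b1 _ _ _ _) (by omega) (by omega) (by omega)
          rw [e, hKp]
          simp only [sort2, Prod.mk.injEq]
          constructor <;> omega
      · -- d > d', d + d' = b
        have hsb : d + d' = b := hbb.resolve_left hdd
        have e := diffPair_digits hb0 h0 ha1 ha2 ha3 hx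
          (perm_bii _ _ _ _) (by omega) (by omega) (by omega)
        rw [e, hKp]
        simp only [sort2, Prod.mk.injEq]
        constructor <;> omega
    · -- type (a)
      push_neg at hbb
      rcases Nat.lt_trichotomy (d + d') b with hs | hs | hs
      · rcases le_or_gt b (2*d) with h2d | h2d
        · have e := diffPair_digits hb0 h0 ha1 ha2 ha3 hx
            (perm_a3 _ _ _ _) (by omega) (by omega) (by omega)
          rw [e, Kpair, if_neg (by omega), if_neg (by omega), if_neg (by push_neg; omega)]
          simp only [sort2, Prod.mk.injEq]
          constructor <;> omega
        · have e := diffPair_digits hb0 h0 ha1 ha2 ha3 hx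
            (perm_a4 _ _ _ _) (by omega) (by omega) (by omega)
          rw [e, Kpair, if_neg (by omega), if_neg (by omega), if_neg (by push_neg; omega)]
          simp only [sort2, Prod.mk.injEq]
          constructor <;> omega
      · exact absurd hs hbb.2
      · rcases le_or_gt (2*d') b with h2d | h2d
        · have e := diffPair_digits hb0 h0 ha1 ha2 ha3 hx
            (perm_a1 _ _ _ _) (by omega) (by omega) (by omega)
          rw [e, Kpair, if_neg (by omega), if_neg (by omega), if_neg (by push_neg; omega)]
          simp only [sort2, Prod.mk.injEq]
          constructor <;> omega
        · have e := diffPair_digits hb0 h0 ha1 ha2 ha3 hx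
            (perm_a2 _ _ _ _) (by omega) (by omega) (by omega)
          rw [e, Kpair, if_neg (by omega), if_neg (by omega), if_neg (by push_neg; omega)]
          simp only [sort2, Prod.mk.injEq]
          constructor <;> omega

theorem Kpair_valid {b : ℕ} (hb : 15 ≤ b) {p : ℕ × ℕ} (h1 : p.2 ≤ p.1) (h2 : p.1 ≤ b - 1) :
    (Kpair b p).2 ≤ (Kpair b p).1 ∧ (Kpair b p).1 ≤ b - 1 := by
  obtain ⟨d, d'⟩ := p
  simp only at h1 h2
  rw [Kpair]
  split_ifs with hz hc hbb <;> simp [sort2] <;> omega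

theorem NN_inj {b d1 d1' d2 d2' : ℕ} (hb : 15 ≤ b)
    (v1 : d1' ≤ d1) (v2 : d1 ≤ b - 1) (w1 : d2' ≤ d2) (w2 : d2 ≤ b - 1)
    (h : NN b d1 d1' = NN b d2 d2') : d1 = d2 ∧ d1' = d2' := by
  have hb3 : 1 ≤ b^3 := Nat.one_le_pow _ _ (by omega)
  have hb2 : b ≤ b^2 := Nat.le_self_pow (by norm_num) b
  have hz : (d1:ℤ) * (b^3 - 1) + d1' * (b^2 - b) = d2 * (b^3 - 1) + d2' * (b^2 - b) := by
    have hh := h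
    rw [NN, NN] at hh
    zify [hb3, hb2] at hh
    exact hh
  have hbz : (15:ℤ) ≤ b := by omega
  have c1 : (0:ℤ) ≤ (b:ℤ)^2 - b := by nlinarith
  have c2 : (0:ℤ) ≤ (b:ℤ)^3 - 1 := by nlinarith
  have c3 : ((b:ℤ)-1) * ((b:ℤ)^2 - b) + 1 ≤ (b:ℤ)^3 - 1 := by nlinarith
  have key : ∀ e e' f f' : ℕ, e' ≤ e → e ≤ b - 1 → f' ≤ f → f ≤ b - 1 →
      (e:ℤ) * (b^3 - 1) + e' * (b^2 - b) = f * (b^3 - 1) + f' * (b^2 - b) →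
      ¬ (e < f) := by
    intro e e' f f' he1 he2 hf1 hf2 heq hlt
    have h1 : (e:ℤ) + 1 ≤ f := by omega
    have g1 : ((e:ℤ) + 1) * ((b:ℤ)^3 - 1) ≤ (f:ℤ) * ((b:ℤ)^3 - 1) :=
      mul_le_mul_of_nonneg_right h1 c2
    have g2 : (e':ℤ) * ((b:ℤ)^2 - b) ≤ ((b:ℤ)-1) * ((b:ℤ)^2 - b) :=
      mul_le_mul_of_nonneg_right (by omega) c1
    have g3 : (0:ℤ) ≤ (f':ℤ) * ((b:ℤ)^2 - b) :=
      mul_nonneg (by omega) c1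
    nlinarith [g1, g2, g3]
  have hd : d1 = d2 := by
    rcases Nat.lt_trichotomy d1 d2 with hlt | heq | hlt
    · exact absurd hlt (key d1 d1' d2 d2' v1 v2 w1 w2 hz)
    · exact heq
    · exact absurd hlt (key d2 d2' d1 d1' w1 w2 v1 v2 hz.symm)
  subst hd
  refine ⟨rfl, ?_⟩
  have h5 : (d1':ℤ) * (b^2 - b) = d2' * (b^2 - b) := by linarith
  have hpos : (0:ℤ) < (b:ℤ)^2 - b := by nlinarith
  have := mul_right_cancel₀ (ne_of_gt hpos) h5
  omega

/-! ### The backward (preimage) analysis -/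

def TT (B : ℕ) (q : ℕ × ℕ) : Prop :=
  q = (3*B, B) ∨ q = (4*B, 3*B) ∨ q = (4*B, 2*B) ∨ q = (2*B, B)

def Good (b m ℓ : ℕ) (q : ℕ × ℕ) : Prop :=
  q.2 ≤ q.1 ∧ q.1 ≤ b - 1 ∧
  ∃ u v : ℕ, q.1 = m*2^ℓ*u ∧ q.2 = m*2^ℓ*v ∧ ¬(5 ∣ u) ∧ ¬(5 ∣ v) ∧ (Odd u ∨ Odd v)

theorem coordEq {b C P x s : ℕ} (hC0 : 0 < C) (hbCP : b = C*P)
    (h : (2*(x:ℤ) - b).natAbs = C*s) :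
    2*x = C*(P+s) ∨ (s ≤ P ∧ 2*x = C*(P-s)) := by
  rcases Int.natAbs_eq (2*(x:ℤ) - b) with he | he <;> rw [h] at he
  · left
    have : (2*(x:ℤ)) = (C:ℤ)*(P+s) := by rw [hbCP] at he; push_cast at he; push_cast; linarith
    exact_mod_cast this
  · right
    have hle : (C:ℤ)*s ≤ (C:ℤ)*P := by
      have : (0:ℤ) ≤ 2*(x:ℤ) := by positivity
      rw [hbCP] at he; push_cast at he; linarith
    have hsP : s ≤ P := le_of_mul_le_mul_left (by exact_mod_cast hle) hC0
    constructor
    · exact hsP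
    · have : (2*(x:ℤ)) = (C:ℤ)*((P:ℤ)-s) := by rw [hbCP] at he; push_cast at he ⊢; linarith
      have h2 : (2*(x:ℤ)) = ((C*(P-s) : ℕ) : ℤ) := by push_cast [hsP]; linarith [this]
      exact_mod_cast h2

theorem coordFull {b C P x s : ℕ} (hC0 : 0 < C) (hbCP : b = C*P)
    (hP5 : 5 ∣ P) (hP2 : 2 ∣ P)
    (h : (2*(x:ℤ) - b).natAbs = C*s) (h5 : ¬ 5 ∣ s) :
    ∃ w, 2*x = C*w ∧ ¬(5 ∣ w) ∧ (Odd s → Odd w) := by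
  rcases coordEq hC0 hbCP h with he | ⟨hsP, he⟩
  · refine ⟨P + s, he, by omega, fun hs => ?_⟩
    rw [Nat.odd_iff] at hs ⊢; omega
  · refine ⟨P - s, he, by omega, fun hs => ?_⟩
    rw [Nat.odd_iff] at hs ⊢; omega

theorem stepDown {m ℓ C x w : ℕ} (hm : Odd m) (hC : C = m*2^ℓ) (hx : 2*x = C*w)
    (hw : Odd w) : 1 ≤ ℓ := by
  by_contra hl
  have hl0 : ℓ = 0 := by omega
  obtain ⟨k, hk⟩ := hm.mul hw
  rw [hl0, pow_zero, mul_one] at hC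
  rw [hC] at hx
  rw [← hx] at hk
  omega

theorem divDown {m ℓ' C x w : ℕ} (hC : C = m*2^(ℓ'+1)) (hx : 2*x = C*w) :
    x = (m*2^ℓ')*w := by
  have h2 : 2*x = 2*((m*2^ℓ')*w) := by rw [hx, hC, pow_succ]; ring
  omega

theorem LG {m n b B ℓ : ℕ} (hm : Odd m) (hm3 : 3 ≤ m) (hB : B = m*2^n) (hb : b = 5*B)
    (hl : ℓ + 1 ≤ n) {q : ℕ × ℕ} (hq1 : q.2 ≤ q.1) (hq2 : q.1 ≤ b - 1)
    (hr : Good b m ℓ (Kpair b q)) :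
    ∃ ℓ', ℓ = ℓ' + 1 ∧ Good b m ℓ' q := by
  obtain ⟨d, d'⟩ := q
  simp only at hq1 hq2
  obtain ⟨hv1, hv2, u, v, hu, hv, hu5, hv5, huv⟩ := hr
  set C := m*2^ℓ with hC
  have hC0 : 0 < C := by positivity
  have hmC : m ∣ C := Dvd.intro _ rfl
  have hbC : b = C*(5*2^(n-ℓ)) := by
    have h2 : 2^ℓ * 2^(n-ℓ) = 2^n := by rw [← pow_add]; congr 1; omega
    rw [hb, hB, hC, ← h2]; ring
  set P := 5*2^(n-ℓ) with hP
  have hP5 : 5 ∣ P := Dvd.intro _ rfl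
  have hP2 : 2 ∣ P := by
    rw [hP, show n - ℓ = (n - ℓ - 1) + 1 by omega, pow_succ]
    exact ⟨5*2^(n-ℓ-1), by ring⟩
  rw [Kpair] at hu hv
  split_ifs at hu hv with hz hc hbb
  · -- zero pair
    exfalso
    have h0 : (0:ℕ) = C*u := hu
    have : u = 0 := by
      rcases Nat.mul_eq_zero.mp h0.symm with h | h
      · omega
      · exact h
    exact hu5 (this ▸ ⟨0, rfl⟩)
  · -- type (c)
    exfalso
    have hd1 : 1 ≤ d := by
      rcases Nat.eq_zero_or_pos d with h | h
      · exact absurd ⟨h, hc⟩ hz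
      · exact h
    simp only [sort2] at hu hv
    have hsum : (d - 1) + (b - d) = C*u + C*v := by
      rcases le_total (d-1) (b-d) with hle | hle
      · rw [max_eq_right hle] at hu; rw [min_eq_left hle] at hv; omega
      · rw [max_eq_left hle] at hu; rw [min_eq_right hle] at hv; omega
    have hsum2 : b - 1 = C*(u+v) := by rw [Nat.mul_add]; omega
    have hmb : m ∣ b := by rw [hb, hB]; exact ⟨5*2^n, by ring⟩
    have hm1 : m ∣ 1 := by
      have h1 : m ∣ C*(u+v) := hmC.mul_right _
      have h2 := Nat.dvd_sub hmb h1
      rw [← hsum2] at h2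
      simpa [show b - (b-1) = 1 by omega] using h2
    have := Nat.le_of_dvd one_pos hm1
    omega
  · -- type (b)
    exfalso
    simp only [sort2] at hu hv
    have h1 : m ∣ (2 * (d:ℤ) - ((b:ℤ) - 1)).natAbs ∧
        m ∣ (2 * (d:ℤ) - ((b:ℤ) + 1)).natAbs := by
      rcases le_total ((2 * (d:ℤ) - ((b:ℤ) - 1)).natAbs)
        ((2 * (d:ℤ) - ((b:ℤ) + 1)).natAbs) with hle | hle
      · rw [max_eq_right hle] at hu; rw [min_eq_left hle] at hv
        exact ⟨by rw [hv]; exact hmC.mul_right _, by rw [hu]; exact hmC.mul_right _⟩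
      · rw [max_eq_left hle] at hu; rw [min_eq_right hle] at hv
        exact ⟨by rw [hu]; exact hmC.mul_right _, by rw [hv]; exact hmC.mul_right _⟩
    have hd1 : (m:ℤ) ∣ (2 * (d:ℤ) - ((b:ℤ) - 1)) := Int.natAbs_dvd_natAbs.mp (by simpa using h1.1)
    have hd2 : (m:ℤ) ∣ (2 * (d:ℤ) - ((b:ℤ) + 1)) := Int.natAbs_dvd_natAbs.mp (by simpa using h1.2)
    have h2 : (m:ℤ) ∣ 2 := by
      have := dvd_sub hd1 hd2
      simpa using this
    have := Int.le_of_dvd (by norm_num) h2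
    omega
  · -- type (a)
    simp only [sort2] at hu hv
    have key : ∃ wd wv : ℕ, 2*d = C*wd ∧ 2*d' = C*wv ∧ ¬(5∣wd) ∧ ¬(5∣wv) ∧
        (Odd wd ∨ Odd wv) := by
      rcases le_total ((2 * (d:ℤ) - (b:ℤ)).natAbs) ((2 * (d':ℤ) - (b:ℤ)).natAbs) with hle | hle
      · rw [max_eq_right hle] at hu; rw [min_eq_left hle] at hv
        obtain ⟨wd, h1, h2, h3⟩ := coordFull hC0 hbC hP5 hP2 hv hv5
        obtain ⟨wv, g1, g2, g3⟩ := coordFull hC0 hbC hP5 hP2 hu hu5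
        exact ⟨wd, wv, h1, g1, h2, g2, by tauto⟩
      · rw [max_eq_left hle] at hu; rw [min_eq_right hle] at hv
        obtain ⟨wd, h1, h2, h3⟩ := coordFull hC0 hbC hP5 hP2 hu hu5
        obtain ⟨wv, g1, g2, g3⟩ := coordFull hC0 hbC hP5 hP2 hv hv5
        exact ⟨wd, wv, h1, g1, h2, g2, by tauto⟩
    obtain ⟨wd, wv, hwd, hwv, hwd5, hwv5, hwodd⟩ := key
    have hl1 : 1 ≤ ℓ := by
      rcases hwodd with ho | ho
      · exact stepDown hm hC hwd ho
      · exact stepDown hm hC hwv ho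
    refine ⟨ℓ - 1, by omega, hq1, hq2, wd, wv, ?_, ?_, hwd5, hwv5, hwodd⟩
    · exact divDown (show C = m*2^(ℓ-1+1) by rw [hC, show ℓ-1+1 = ℓ by omega]) hwd
    · exact divDown (show C = m*2^(ℓ-1+1) by rw [hC, show ℓ-1+1 = ℓ by omega]) hwv

theorem FT {b B : ℕ} (hB3 : 3 ≤ B) (hb : b = 5*B) {q : ℕ × ℕ} (hq : TT B q) :
    Kpair b q = (3*B, B) := by
  rcases hq with rfl | rfl | rfl | rfl <;>
    [skip; skip; skip; skip] <;>
    rw [Kpair, if_neg (by omega), if_neg (by omega), if_neg (by push_neg; omega)] <;>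
    simp only [sort2, Prod.mk.injEq] <;> constructor <;> omega

theorem L0 {b B : ℕ} (hB3 : 3 ≤ B) (hb : b = 5*B) {q : ℕ × ℕ} (hq1 : q.2 ≤ q.1)
    (h : Kpair b q = (3*B, B)) : TT B q := by
  obtain ⟨d, d'⟩ := q
  simp only at hq1
  rw [Kpair] at h
  split_ifs at h with hz hc hbb <;>
    simp only [sort2, Prod.mk.injEq] at h <;>
    [exact absurd h.2 (by omega); omega; omega; skip]
  rw [TT]
  simp only [Prod.mk.injEq]
  omega

theorem LTop {m n b B : ℕ} (hm : Odd m) (hm3 : 3 ≤ m) (hB : B = m*2^n) (hb : b = 5*B)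
    {q r : ℕ × ℕ} (hq1 : q.2 ≤ q.1) (hq2 : q.1 ≤ b - 1)
    (hr : r = (4*B, 3*B) ∨ r = (4*B, 2*B) ∨ r = (2*B, B))
    (h : Kpair b q = r) : 1 ≤ n ∧ Good b m (n-1) q := by
  have hB3 : 3 ≤ B := by
    rw [hB]
    calc 3 ≤ m := hm3
    _ = m * 1 := (mul_one m).symm
    _ ≤ m * 2^n := Nat.mul_le_mul_left m Nat.one_le_two_pow
  obtain ⟨d, d'⟩ := q
  simp only at hq1 hq2
  rw [Kpair] at h
  split_ifs at h with hz hc hbb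
  · rcases hr with rfl | rfl | rfl <;> simp only [Prod.mk.injEq] at h <;> omega
  · rcases hr with rfl | rfl | rfl <;>
      simp only [sort2, Prod.mk.injEq] at h <;> omega
  · rcases hr with rfl | rfl | rfl <;>
      simp only [sort2, Prod.mk.injEq] at h <;> omega
  · -- type (a)
    rcases hr with rfl | rfl | rfl <;> simp only [sort2, Prod.mk.injEq] at h
    · have hBe : 2 ∣ B := by omega
      have hn1 : 1 ≤ n := by
        by_contra hn
        have hn0 : n = 0 := by omega
        rw [hn0, pow_zero, mul_one] at hB
        obtain ⟨k, hk⟩ := hm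
        omega
      set D := m*2^(n-1) with hD
      have hBD : B = 2*D := by
        rw [hD, hB]
        conv_lhs => rw [show n = (n-1)+1 by omega]
        rw [pow_succ]; ring
      refine ⟨hn1, hq1, hq2, ?_⟩
      have hcase : ((d = 9*D ∨ d = 1*D) ∧ (d' = 8*D ∨ d' = 2*D)) ∨
          ((d = 8*D ∨ d = 2*D) ∧ (d' = 9*D ∨ d' = 1*D)) := by omega
      rcases hcase with ⟨hdc, hdc'⟩ | ⟨hdc, hdc'⟩
      · obtain ⟨u, hu, hu5, huo⟩ : ∃ u, d = m*2^(n-1)*u ∧ ¬(5∣u) ∧ Odd u := by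
          rcases hdc with h'|h'
          exacts [⟨9, by rw [h', hD]; ring, by norm_num, by decide⟩,
            ⟨1, by rw [h', hD]; ring, by norm_num, by decide⟩]
        obtain ⟨v, hv, hv5⟩ : ∃ v, d' = m*2^(n-1)*v ∧ ¬(5∣v) := by
          rcases hdc' with h'|h'
          exacts [⟨8, by rw [h', hD]; ring, by norm_num⟩,
            ⟨2, by rw [h', hD]; ring, by norm_num⟩]
        exact ⟨u, v, hu, hv, hu5, hv5, Or.inl huo⟩
      · obtain ⟨u, hu, hu5⟩ : ∃ u, d = m*2^(n-1)*u ∧ ¬(5∣u) := by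
          rcases hdc with h'|h'
          exacts [⟨8, by rw [h', hD]; ring, by norm_num⟩,
            ⟨2, by rw [h', hD]; ring, by norm_num⟩]
        obtain ⟨v, hv, hv5, hvo⟩ : ∃ v, d' = m*2^(n-1)*v ∧ ¬(5∣v) ∧ Odd v := by
          rcases hdc' with h'|h'
          exacts [⟨9, by rw [h', hD]; ring, by norm_num, by decide⟩,
            ⟨1, by rw [h', hD]; ring, by norm_num, by decide⟩]
        exact ⟨u, v, hu, hv, hu5, hv5, Or.inr hvo⟩
    · have hBe : 2 ∣ B := by omega
      have hn1 : 1 ≤ n := by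
        by_contra hn
        have hn0 : n = 0 := by omega
        rw [hn0, pow_zero, mul_one] at hB
        obtain ⟨k, hk⟩ := hm
        omega
      set D := m*2^(n-1) with hD
      have hBD : B = 2*D := by
        rw [hD, hB]
        conv_lhs => rw [show n = (n-1)+1 by omega]
        rw [pow_succ]; ring
      refine ⟨hn1, hq1, hq2, ?_⟩
      have hcase : ((d = 9*D ∨ d = 1*D) ∧ (d' = 7*D ∨ d' = 3*D)) ∨
          ((d = 7*D ∨ d = 3*D) ∧ (d' = 9*D ∨ d' = 1*D)) := by omega
      rcases hcase with ⟨hdc, hdc'⟩ | ⟨hdc, hdc'⟩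
      · obtain ⟨u, hu, hu5, huo⟩ : ∃ u, d = m*2^(n-1)*u ∧ ¬(5∣u) ∧ Odd u := by
          rcases hdc with h'|h'
          exacts [⟨9, by rw [h', hD]; ring, by norm_num, by decide⟩,
            ⟨1, by rw [h', hD]; ring, by norm_num, by decide⟩]
        obtain ⟨v, hv, hv5⟩ : ∃ v, d' = m*2^(n-1)*v ∧ ¬(5∣v) := by
          rcases hdc' with h'|h'
          exacts [⟨7, by rw [h', hD]; ring, by norm_num⟩,
            ⟨3, by rw [h', hD]; ring, by norm_num⟩]
        exact ⟨u, v, hu, hv, hu5, hv5, Or.inl huo⟩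
      · obtain ⟨u, hu, hu5⟩ : ∃ u, d = m*2^(n-1)*u ∧ ¬(5∣u) := by
          rcases hdc with h'|h'
          exacts [⟨7, by rw [h', hD]; ring, by norm_num⟩,
            ⟨3, by rw [h', hD]; ring, by norm_num⟩]
        obtain ⟨v, hv, hv5, hvo⟩ : ∃ v, d' = m*2^(n-1)*v ∧ ¬(5∣v) ∧ Odd v := by
          rcases hdc' with h'|h'
          exacts [⟨9, by rw [h', hD]; ring, by norm_num, by decide⟩,
            ⟨1, by rw [h', hD]; ring, by norm_num, by decide⟩]
        exact ⟨u, v, hu, hv, hu5, hv5, Or.inr hvo⟩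
    · have hBe : 2 ∣ B := by omega
      have hn1 : 1 ≤ n := by
        by_contra hn
        have hn0 : n = 0 := by omega
        rw [hn0, pow_zero, mul_one] at hB
        obtain ⟨k, hk⟩ := hm
        omega
      set D := m*2^(n-1) with hD
      have hBD : B = 2*D := by
        rw [hD, hB]
        conv_lhs => rw [show n = (n-1)+1 by omega]
        rw [pow_succ]; ring
      refine ⟨hn1, hq1, hq2, ?_⟩
      have hcase : ((d = 7*D ∨ d = 3*D) ∧ (d' = 6*D ∨ d' = 4*D)) ∨
          ((d = 6*D ∨ d = 4*D) ∧ (d' = 7*D ∨ d' = 3*D)) := by omega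
      rcases hcase with ⟨hdc, hdc'⟩ | ⟨hdc, hdc'⟩
      · obtain ⟨u, hu, hu5, huo⟩ : ∃ u, d = m*2^(n-1)*u ∧ ¬(5∣u) ∧ Odd u := by
          rcases hdc with h'|h'
          exacts [⟨7, by rw [h', hD]; ring, by norm_num, by decide⟩,
            ⟨3, by rw [h', hD]; ring, by norm_num, by decide⟩]
        obtain ⟨v, hv, hv5⟩ : ∃ v, d' = m*2^(n-1)*v ∧ ¬(5∣v) := by
          rcases hdc' with h'|h'
          exacts [⟨6, by rw [h', hD]; ring, by norm_num⟩,
            ⟨4, by rw [h', hD]; ring, by norm_num⟩]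
        exact ⟨u, v, hu, hv, hu5, hv5, Or.inl huo⟩
      · obtain ⟨u, hu, hu5⟩ : ∃ u, d = m*2^(n-1)*u ∧ ¬(5∣u) := by
          rcases hdc with h'|h'
          exacts [⟨6, by rw [h', hD]; ring, by norm_num⟩,
            ⟨4, by rw [h', hD]; ring, by norm_num⟩]
        obtain ⟨v, hv, hv5, hvo⟩ : ∃ v, d' = m*2^(n-1)*v ∧ ¬(5∣v) ∧ Odd v := by
          rcases hdc' with h'|h'
          exacts [⟨7, by rw [h', hD]; ring, by norm_num, by decide⟩,
            ⟨3, by rw [h', hD]; ring, by norm_num, by decide⟩]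
        exact ⟨u, v, hu, hv, hu5, hv5, Or.inr hvo⟩

theorem chain {m n b B : ℕ} (hm : Odd m) (hm3 : 3 ≤ m) (hB : B = m*2^n) (hb : b = 5*B) :
    ∀ t (q : ℕ × ℕ), q.2 ≤ q.1 → q.1 ≤ b - 1 → (Kpair b)^[t] q = (3*B, B) →
    (Kpair b)^[n+1] q = (3*B, B) := by
  have hB3 : 3 ≤ B := by
    rw [hB]
    calc 3 ≤ m := hm3
    _ = m * 1 := (mul_one m).symm
    _ ≤ m * 2^n := Nat.mul_le_mul_left m Nat.one_le_two_pow
  have hb15 : 15 ≤ b := by omega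
  have hfix : Kpair b (3*B, B) = (3*B, B) := FT hB3 hb (Or.inl rfl)
  intro t
  induction t using Nat.strong_induction_on with
  | _ t IH =>
    intro q hq1 hq2 ht
    by_cases hle : t ≤ n+1
    · have he : (Kpair b)^[n+1] q = (Kpair b)^[(n+1-t)+t] q := by congr 1; omega
      rw [he, Function.iterate_add_apply, ht, Function.iterate_fixed hfix]
    · push_neg at hle
      by_cases hhit : ∃ i, i < t ∧ (Kpair b)^[i] q = (3*B, B)
      · obtain ⟨i, hi, hieq⟩ := hhit
        exact IH i hi q hq1 hq2 hieq
      · exfalso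
        push_neg at hhit
        have hval : ∀ j, ((Kpair b)^[j] q).2 ≤ ((Kpair b)^[j] q).1 ∧
            ((Kpair b)^[j] q).1 ≤ b-1 := by
          intro j
          induction j with
          | zero => exact ⟨hq1, hq2⟩
          | succ j ihj => rw [Function.iterate_succ_apply']; exact Kpair_valid hb15 ihj.1 ihj.2
        have hstep : ∀ j, j+1 ≤ t-1 →
            Kpair b ((Kpair b)^[t-1-(j+1)] q) = (Kpair b)^[t-1-j] q := by
          intro j hj
          have he : (Kpair b)^[t-1-j] q = (Kpair b)^[(t-1-(j+1))+1] q := by congr 1; omega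
          rw [he, Function.iterate_succ_apply']
        have hne : ∀ j, j ≤ t-1 → (Kpair b)^[t-1-j] q ≠ (3*B,B) :=
          fun j hj => hhit _ (by omega)
        have hr0 : Kpair b ((Kpair b)^[t-1-0] q) = (3*B,B) := by
          have he : (Kpair b)^[t] q = (Kpair b)^[(t-1-0)+1] q := by congr 1; omega
          rw [he, Function.iterate_succ_apply'] at ht
          exact ht
        have hT0 : TT B ((Kpair b)^[t-1-0] q) := L0 hB3 hb (hval _).1 hr0
        have hT0' : (Kpair b)^[t-1-0] q = (4*B,3*B) ∨ (Kpair b)^[t-1-0] q = (4*B,2*B) ∨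
            (Kpair b)^[t-1-0] q = (2*B,B) := by
          rcases hT0 with h|h|h|h
          · exact absurd h (hne 0 (by omega))
          all_goals tauto
        have h1 := LTop hm hm3 hB hb (hval (t-1-(0+1))).1 (hval _).2 hT0'
          (hstep 0 (by omega))
        have hn1 : 1 ≤ n := h1.1
        have hgood : ∀ j, j ≤ n-1 → Good b m (n-1-j) ((Kpair b)^[t-1-(1+j)] q) := by
          intro j
          induction j with
          | zero => intro _; simpa using h1.2
          | succ j ihj =>
            intro hjn
            have hprev := ihj (by omega)
            have hKq : Kpair b ((Kpair b)^[t-1-(1+(j+1))] q) = (Kpair b)^[t-1-(1+j)] q := by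
              have := hstep (1+j) (by omega)
              rw [show 1+j+1 = 1+(j+1) by omega] at this
              exact this
            obtain ⟨ℓ', hℓ', hg⟩ := LG hm hm3 hB hb (ℓ := n-1-j) (by omega)
              (hval (t-1-(1+(j+1)))).1 (hval _).2 (by rw [hKq]; exact hprev)
            have : ℓ' = n-1-(j+1) := by omega
            rwa [← this]
        have hg0 : Good b m 0 ((Kpair b)^[t-1-n] q) := by
          have := hgood (n-1) (le_refl _)
          rw [show n-1-(n-1) = 0 by omega, show 1+(n-1) = n by omega] at this
          exact this
        have hKq : Kpair b ((Kpair b)^[t-1-(n+1)] q) = (Kpair b)^[t-1-n] q :=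
          hstep n (by omega)
        obtain ⟨ℓ', hℓ', _⟩ := LG hm hm3 hB hb (ℓ := 0) (by omega)
          (hval (t-1-(n+1))).1 (hval _).2 (by rw [hKq]; exact hg0)
        omega

theorem KapNN {b : ℕ} (hb15 : 15 ≤ b) {p : ℕ × ℕ} (h1 : p.2 ≤ p.1) (h2 : p.1 ≤ b - 1) :
    Kap b (NN b p.1 p.2) = NN b (Kpair b p).1 (Kpair b p).2 := by
  obtain ⟨e, hd1, hd2⟩ := Kap_spec b (NN b p.1 p.2) (by omega)
  rw [e]
  have hd : diffPair b (NN b p.1 p.2) = Kpair b p := by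
    obtain ⟨d, d'⟩ := p
    exact diffPair_NN b d d' hb15 h1 h2
  rw [hd]

theorem pair_valid_iter {b : ℕ} (hb15 : 15 ≤ b) {p : ℕ × ℕ} (h1 : p.2 ≤ p.1)
    (h2 : p.1 ≤ b - 1) (j : ℕ) :
    ((Kpair b)^[j] p).2 ≤ ((Kpair b)^[j] p).1 ∧ ((Kpair b)^[j] p).1 ≤ b - 1 := by
  induction j with
  | zero => exact ⟨h1, h2⟩
  | succ j ihj => rw [Function.iterate_succ_apply']; exact Kpair_valid hb15 ihj.1 ihj.2

theorem iter_formula {b : ℕ} (hb15 : 15 ≤ b) (x : ℕ) (s : ℕ) :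
    (Kap b)^[s+1] x =
      NN b ((Kpair b)^[s] (diffPair b x)).1 ((Kpair b)^[s] (diffPair b x)).2 := by
  obtain ⟨hK, hv1, hv2⟩ := Kap_spec b x (by omega)
  induction s with
  | zero => simpa using hK
  | succ s ih =>
    rw [Function.iterate_succ_apply' (Kap b), ih]
    have hv := pair_valid_iter hb15 hv1 hv2 s (p := diffPair b x)
    rw [KapNN hb15 hv.1 hv.2, Function.iterate_succ_apply' (Kpair b)]

theorem Kpair_fixed {b B : ℕ} (hB3 : 3 ≤ B) (hb : b = 5*B) {p : ℕ × ℕ}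
    (h1 : p.2 ≤ p.1) (h2 : p.1 ≤ b - 1) (h : Kpair b p = p) :
    p = (3*B, B) ∨ p = (0, 0) := by
  obtain ⟨d, d'⟩ := p
  simp only at h1 h2
  rw [Kpair] at h
  simp only [Prod.mk.injEq] at *
  split_ifs at h with hz hc hbb <;> simp only [sort2, Prod.mk.injEq] at h <;> omega

theorem not_three_dvd_two_pow (n : ℕ) : ¬ (3 ∣ 2^n) := by
  intro h
  have h2 : (3:ℕ).Prime := by norm_num
  have := h2.dvd_of_dvd_pow (n := n) (m := 2) h
  omega

theorem witness_orbit {m n b B : ℕ} (hm : Odd m) (hm3 : 3 ≤ m) (hB : B = m*2^n)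
    (hb : b = 5*B) :
    ∀ k, 1 ≤ k → k ≤ n+1 →
      (Kpair b)^[k] (2*m, m) = (b - 2^k*m, b - 2^(k+1)*m) := by
  have hmB : m ≤ B := by
    rw [hB]
    calc m = m*1 := (mul_one m).symm
    _ ≤ m*2^n := Nat.mul_le_mul_left m Nat.one_le_two_pow
  intro k hk1 hk2
  induction k with
  | zero => omega
  | succ k ih =>
    rcases Nat.eq_zero_or_pos k with hk0 | hkpos
    · subst hk0
      rw [Function.iterate_one, Kpair, if_neg (by omega), if_neg (by omega),
        if_neg (by push_neg; omega)]
      simp only [sort2, Prod.mk.injEq]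
      norm_num
      constructor <;> omega
    · have ihh := ih (by omega) (by omega)
      rw [Function.iterate_succ_apply', ihh]
      have hE2 : 2^(k+1)*m = 2*(2^k*m) := by rw [pow_succ]; ring
      have hE4 : 2^(k+1+1)*m = 4*(2^k*m) := by rw [pow_succ, pow_succ]; ring
      have hEb : 2^(k+1)*m ≤ 2*B := by
        rw [hB, show 2*(m*2^n) = 2^(n+1)*m by rw [pow_succ]; ring]
        exact Nat.mul_le_mul_right m (Nat.pow_le_pow_right (by norm_num) (by omega))
      have hmE : m ≤ 2^k*m := by
        calc m = 1*m := (one_mul m).symm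
        _ ≤ 2^k*m := Nat.mul_le_mul_right m Nat.one_le_two_pow
      have h3E : b ≠ 3*(2^k*m) := by
        intro hcon
        have h5 : 5*2^n = 3*2^k := by
          have h6 : (5*2^n)*m = (3*2^k)*m := by
            rw [hb, hB] at hcon
            calc (5*2^n)*m = 5*(m*2^n) := by ring
            _ = 3*(2^k*m) := hcon
            _ = (3*2^k)*m := by ring
          exact Nat.eq_of_mul_eq_mul_right (by omega) h6
        have hdv : (3:ℕ) ∣ 5*2^n := ⟨2^k, h5⟩
        have h35 : (3:ℕ) ∣ 2^n := by
          rcases (Nat.Prime.dvd_mul (by norm_num)).mp hdv with h | h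
          · omega
          · exact h
        exact not_three_dvd_two_pow n h35
      rw [Kpair, if_neg (by omega), if_neg (by omega), if_neg (by push_neg; omega)]
      simp only [sort2, Prod.mk.injEq]
      constructor <;> omega

theorem witness_diffPair {b m : ℕ} (hb15 : 15 ≤ b) (hm3 : 3 ≤ m) (h2m : 2*m ≤ b - 1) :
    diffPair b (2*m*b^3 + m*b^2) = (2*m, m) := by
  have e := diffPair_digits (b := b) (a0 := 0) (a1 := 0) (a2 := m) (a3 := 2*m)
    (x := 2*m*b^3 + m*b^2) (s0 := 2*m) (s1 := m) (s2 := 0) (s3 := 0)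
    (by omega) (by omega) (by omega) (by omega) (by omega) (by ring_nf)
    (perm_b1 _ _ _ _) (by omega) (by omega) (by omega)
  rw [e]
  simp

/-- if `b = 5m·2^n` with `m > 1` odd, then `M_b = n + 2`. -/
theorem kaprekar_M_irregular (m n b : ℕ) (hm : Odd m) (hm1 : 1 < m)
    (hb : b = 5 * m * 2 ^ n) :
    IsLeast {k : ℕ | ∀ x ∈ KapSet b, (Kap b)^[k] x = (Kap b)^[k + 1] x} (n + 2) := by
  obtain ⟨jm, hjm⟩ := hm
  have hm3 : 3 ≤ m := by omega
  have hmodd : Odd m := ⟨jm, hjm⟩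
  set B := m * 2^n with hB
  have hb' : b = 5*B := by rw [hb, hB]; ring
  have hmB : m ≤ B := by
    rw [hB]
    calc m = m*1 := (mul_one m).symm
    _ ≤ m*2^n := Nat.mul_le_mul_left m Nat.one_le_two_pow
  have hB3 : 3 ≤ B := by omega
  have hb15 : 15 ≤ b := by omega
  have hfix : Kpair b (3*B, B) = (3*B, B) := FT hB3 hb' (Or.inl rfl)
  have hvstar1 : ((3*B : ℕ), B).2 ≤ ((3*B:ℕ), B).1 := by simp; omega
  have hvstar2 : ((3*B : ℕ), B).1 ≤ b - 1 := by simp; omega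
  have hNNfix : Kap b (NN b (3*B) B) = NN b (3*B) B := by
    have := KapNN hb15 (p := (3*B, B)) hvstar1 hvstar2
    rw [hfix] at this
    exact this
  have hb3 : b ≤ b^3 := Nat.le_self_pow (by norm_num) b
  have hNNpos : NN b (3*B) B ≠ 0 := by
    rw [NN]
    have h1 : 0 < 3*B*(b^3 - 1) := Nat.mul_pos (by omega) (by omega)
    omega
  -- the witness
  set x₀ := 2*m*b^3 + m*b^2 with hx₀
  have h2mb : 2*m ≤ b - 1 := by omega
  have hdp₀ : diffPair b x₀ = (2*m, m) := witness_diffPair hb15 hm3 h2mb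
  have hx₀lt : x₀ < b^4 := by
    rw [hx₀]
    have h1 : m*b^2 ≤ m*b^3 := Nat.mul_le_mul_left m (Nat.pow_le_pow_right (by omega) (by norm_num))
    have h2 : (3*m+1)*b^3 ≤ b*b^3 := Nat.mul_le_mul_right _ (by omega)
    have h3 : b*b^3 = b^4 := by ring
    have h4 : 0 < b^3 := by positivity
    nlinarith
  have hv₀1 : ((2*m : ℕ), m).2 ≤ ((2*m:ℕ), m).1 := by simp; omega
  have hv₀2 : ((2*m : ℕ), m).1 ≤ b - 1 := by simp; omega
  -- the orbit of the witness pair reaches the fixed point at time exactly n+1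
  have hpow2 : ∀ j, j ≤ n+1 → 2^j*m ≤ 2*B := by
    intro j hj
    rw [hB, show 2*(m*2^n) = 2^(n+1)*m by rw [pow_succ]; ring]
    exact Nat.mul_le_mul_right m (Nat.pow_le_pow_right (by norm_num) hj)
  have h2n1 : 2^(n+1)*m = 2*B := by rw [hB, pow_succ]; ring
  have h2n2 : 2^(n+1+1)*m = 4*B := by rw [hB, pow_succ, pow_succ]; ring
  have horb := witness_orbit hmodd hm3 hB hb'
  have hreach : (Kpair b)^[n+1] (2*m, m) = (3*B, B) := by
    rw [horb (n+1) (by omega) (le_refl _)]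
    simp only [Prod.mk.injEq]
    constructor <;> omega
  have hstay : ∀ s, n+1 ≤ s → (Kpair b)^[s] (2*m, m) = (3*B, B) := by
    intro s hs
    have he : (Kpair b)^[s] (2*m, m) = (Kpair b)^[(s-(n+1)) + (n+1)] (2*m, m) := by
      congr 1; omega
    rw [he, Function.iterate_add_apply, hreach, Function.iterate_fixed hfix]
  have hKs : ∀ s, n+2 ≤ s → (Kap b)^[s] x₀ = NN b (3*B) B := by
    intro s hs
    have he : (Kap b)^[s] x₀ = (Kap b)^[(s-1)+1] x₀ := by congr 1; omega
    rw [he, iter_formula hb15, hdp₀, hstay (s-1) (by omega)]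
  have hx₀mem : x₀ ∈ KapSet b := by
    refine ⟨hx₀lt, n+2, fun s hs => ?_, ?_⟩
    · rw [hKs s hs, hKs (n+2) (le_refl _)]
    · rw [hKs (n+2) (le_refl _)]
      exact hNNpos
  constructor
  · -- upper bound
    rintro x ⟨hxlt, t, hconst, hne0⟩
    have hv := Kap_spec b x (by omega)
    have hvx1 := hv.2.1
    have hvx2 := hv.2.2
    have hpv := fun j => pair_valid_iter hb15 hvx1 hvx2 j (p := diffPair b x)
    -- the iterates pair-stabilize at (3B, B)
    have ht1 : (Kap b)^[t+1] x = (Kap b)^[t] x := hconst (t+1) (by omega)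
    have ht2 : (Kap b)^[t+2] x = (Kap b)^[t] x := hconst (t+2) (by omega)
    have hNN1 : (Kap b)^[t+1] x = NN b ((Kpair b)^[t] (diffPair b x)).1
        ((Kpair b)^[t] (diffPair b x)).2 := iter_formula hb15 x t
    have hNN2 : (Kap b)^[t+2] x = NN b ((Kpair b)^[t+1] (diffPair b x)).1
        ((Kpair b)^[t+1] (diffPair b x)).2 := iter_formula hb15 x (t+1)
    have hNNeq : NN b ((Kpair b)^[t+1] (diffPair b x)).1 ((Kpair b)^[t+1] (diffPair b x)).2
        = NN b ((Kpair b)^[t] (diffPair b x)).1 ((Kpair b)^[t] (diffPair b x)).2 := by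
      rw [← hNN1, ← hNN2, ht1, ht2]
    have hpeq := NN_inj hb15 (hpv (t+1)).1 (hpv (t+1)).2 (hpv t).1 (hpv t).2 hNNeq
    have hfixt : Kpair b ((Kpair b)^[t] (diffPair b x)) = (Kpair b)^[t] (diffPair b x) := by
      rw [← Function.iterate_succ_apply' (Kpair b)]
      exact Prod.ext hpeq.1 hpeq.2
    have hclass := Kpair_fixed hB3 hb' (hpv t).1 (hpv t).2 hfixt
    have hstar : (Kpair b)^[t] (diffPair b x) = (3*B, B) := by
      rcases hclass with h | h
      · exact h
      · exfalso
        apply hne0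
        have hts : (Kap b)^[t] x = (Kap b)^[t+1] x := ht1.symm
        rw [hts, hNN1, h]
        rw [NN]
        simp
    have hchain := chain hmodd hm3 hB hb' t (diffPair b x) hvx1 hvx2 hstar
    have hchain2 : (Kpair b)^[n+2] (diffPair b x) = (3*B, B) := by
      rw [Function.iterate_succ_apply' (Kpair b), hchain, hfix]
    rw [iter_formula hb15 x (n+1), iter_formula hb15 x (n+2), hchain, hchain2]
  · -- lower bound
    intro k hk
    have hkx := hk x₀ hx₀mem
    by_contra hlt
    push_neg at hlt
    have hkn : k ≤ n+1 := by omega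
    rcases Nat.eq_zero_or_pos k with hk0 | hk1
    · subst hk0
      rw [Function.iterate_zero_apply, Function.iterate_one] at hkx
      have hKx : Kap b x₀ = NN b (2*m) m := by
        have := iter_formula hb15 x₀ 0
        rw [Function.iterate_one, Function.iterate_zero_apply, hdp₀] at this
        exact this
      have hident : NN b (2*m) m + (2*m + m*b) = 2*m*b^3 + m*b^2 := by
        rw [NN]
        have hbb2 : b ≤ b^2 := Nat.le_self_pow (by norm_num) b
        zify [show 1 ≤ b^3 by omega, hbb2]
        ring
      rw [← hKx] at hident
      rw [← hkx] at hident
      have hmb : 0 < m*b := Nat.mul_pos (by omega) (by omega)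
      omega
    · -- 1 ≤ k ≤ n+1
      have hvq := fun j => pair_valid_iter hb15 hv₀1 hv₀2 j (p := ((2*m : ℕ), m))
      have hNNk : (Kap b)^[k] x₀ = NN b ((Kpair b)^[k-1] (2*m, m)).1
          ((Kpair b)^[k-1] (2*m, m)).2 := by
        have he : (Kap b)^[k] x₀ = (Kap b)^[(k-1)+1] x₀ := by congr 1; omega
        rw [he, iter_formula hb15, hdp₀]
      have hNNk1 : (Kap b)^[k+1] x₀ = NN b ((Kpair b)^[k] (2*m, m)).1
          ((Kpair b)^[k] (2*m, m)).2 := by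
        rw [iter_formula hb15, hdp₀]
      rw [hNNk, hNNk1] at hkx
      have hpeq := NN_inj hb15 (hvq (k-1)).1 (hvq (k-1)).2 (hvq k).1 (hvq k).2 hkx
      have hqk := horb k hk1 hkn
      rcases Nat.eq_zero_or_pos (k-1) with hk10 | hk11
      · -- k = 1 : (2m, m) = (b-2m, b-4m)
        have hk1' : k = 1 := by omega
        subst hk1'
        rw [Function.iterate_zero_apply] at hpeq
        rw [hqk] at hpeq
        simp only [pow_one, show (1:ℕ)+1 = 2 by rfl] at hpeq
        have h4 : 2^2*m = 4*m := by norm_num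
        omega
      · have hqk1 := horb (k-1) hk11 (by omega)
        rw [show k-1+1 = k by omega] at hqk1
        rw [hqk, hqk1] at hpeq
        have hlt2 : 2^(k-1)*m < 2^k*m := by
          have : 2^(k-1) < 2^k := Nat.pow_lt_pow_right one_lt_two (by omega)
          exact Nat.mul_lt_mul_of_lt_of_le this (le_refl m) (by omega)
        have hle2 : 2^k*m ≤ 2*B := hpow2 k hkn
        have hle1 : 2^(k-1)*m ≤ 2*B := hpow2 (k-1) (by omega)
        omega
end

section
/- Let b ≥ 5 be divisible by 5. If x with 0 ≤ x < b^4 has difference pair (3b/5, b/5), then K_b(x) = F_b; in particular, since F_b itself has difference pair (3b/5, b/5), F_b is a fixed point of K_b, i.e. K_b(F_b) = F_b. -/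
-- key lemma
theorem kap_key (b k x : ℕ) (hb : b = 5 * k) (hk : 1 ≤ k)
    (h : diffPair b x = (3 * k, k)) :
    Kap b x = 3 * k * b ^ 3 + (k - 1) * b ^ 2 + (4 * k - 1) * b + 2 * k := by
  obtain ⟨a, c, d, e, hL⟩ : ∃ a c d e, sortedDigits b x = [a, c, d, e] := by
    have hlen : (sortedDigits b x).length = 4 := by
      rw [sortedDigits, List.length_insertionSort]; rfl
    match hl : sortedDigits b x, hlen with
    | [a, c, d, e], _ => exact ⟨a, c, d, e, rfl⟩
  have hs : (sortedDigits b x).Pairwise (· ≥ ·) := List.pairwise_insertionSort _ _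
  rw [hL] at hs
  simp [List.pairwise_cons] at hs
  rw [diffPair, hL] at h
  simp at h
  have hae : a = e + 3 * k := by omega
  have hcd : c = d + k := by omega
  rw [Kap, hL]
  simp only [List.getElem!_cons_zero, List.getElem!_cons_succ]
  obtain ⟨m, rfl⟩ : ∃ m, k = m + 1 := ⟨k - 1, by omega⟩
  subst hae hcd hb
  have key : (e + 3 * (m+1)) * (5*(m+1)) ^ 3 + (d + (m+1)) * (5*(m+1)) ^ 2 + d * (5*(m+1)) + e
      = (e * (5*(m+1)) ^ 3 + d * (5*(m+1)) ^ 2 + (d + (m+1)) * (5*(m+1)) + (e + 3 * (m+1)))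
        + (3 * (m+1) * (5*(m+1)) ^ 3 + ((m+1) - 1) * (5*(m+1)) ^ 2 + (4 * (m+1) - 1) * (5*(m+1)) + 2 * (m+1)) := by
    have h1 : (m+1) - 1 = m := by omega
    have h2 : 4 * (m+1) - 1 = 4*m + 3 := by omega
    rw [h1, h2]; ring
  rw [key, Nat.add_sub_cancel_left]

theorem sortedDigits_F (m : ℕ) :
    sortedDigits (5*(m+1)) (3*(m+1) * (5*(m+1))^3 + m * (5*(m+1))^2 + (4*m+3) * (5*(m+1)) + (2*m+2))
      = [4*m+3, 3*(m+1), 2*m+2, m] := by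
  set b := 5*(m+1) with hb
  set F := 3*(m+1) * b^3 + m * b^2 + (4*m+3) * b + (2*m+2) with hF
  have hb0 : 0 < b := by omega
  have e0 : F % b = 2*m+2 := by
    have : F = (2*m+2) + b * (3*(m+1) * b^2 + m * b + (4*m+3)) := by rw [hF]; ring
    rw [this, Nat.add_mul_mod_self_left, Nat.mod_eq_of_lt (by omega)]
  have e1' : F / b = 3*(m+1) * b^2 + m * b + (4*m+3) := by
    have : F = (2*m+2) + b * (3*(m+1) * b^2 + m * b + (4*m+3)) := by rw [hF]; ring
    rw [this, Nat.add_mul_div_left _ _ hb0, Nat.div_eq_of_lt (by omega), Nat.zero_add]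
  have e1 : F / b % b = 4*m+3 := by
    rw [e1', show 3*(m+1) * b^2 + m * b + (4*m+3) = (4*m+3) + b * (3*(m+1) * b + m) from by ring,
      Nat.add_mul_mod_self_left, Nat.mod_eq_of_lt (by omega)]
  have e2' : F / b^2 = 3*(m+1) * b + m := by
    rw [pow_two, ← Nat.div_div_eq_div_mul, e1',
      show 3*(m+1) * b^2 + m * b + (4*m+3) = (4*m+3) + b * (3*(m+1) * b + m) from by ring,
      Nat.add_mul_div_left _ _ hb0, Nat.div_eq_of_lt (by omega), Nat.zero_add]
  have e2 : F / b^2 % b = m := by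
    rw [e2', show 3*(m+1) * b + m = m + b * (3*(m+1)) from by ring,
      Nat.add_mul_mod_self_left, Nat.mod_eq_of_lt (by omega)]
  have e3 : F / b^3 % b = 3*(m+1) := by
    rw [show b^3 = b^2 * b from by ring, ← Nat.div_div_eq_div_mul, e2',
      show 3*(m+1) * b + m = m + b * (3*(m+1)) from by ring,
      Nat.add_mul_div_left _ _ hb0, Nat.div_eq_of_lt (by omega), Nat.zero_add,
      Nat.mod_eq_of_lt (by omega)]
  rw [sortedDigits, e0, e1, e2, e3]
  have : 3*(m+1) = 3*m+3 := by ring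
  rw [this]
  simp only [List.insertionSort]
  iterate 6 all_goals ((try simp only [List.orderedInsert]); try split_ifs)
  all_goals simp_all
  all_goals (rw [if_neg (by omega)]; simp [List.orderedInsert, show 3 * m ≤ 4 * m by omega, show ¬ 4 * m < 2 * m by omega, show ¬ 3 * m < 2 * m by omega, show ¬ 2 * m + 2 < m by omega])

/-- if `5 ∣ b`, `b ≥ 5` and `x` has difference pair `(3b/5, b/5)`,
then `K_b(x) = F_b`, and `F_b` is a fixed point of `K_b`. -/
theorem kaprekar_fixed_point (b : ℕ) (hb5 : 5 ∣ b) (hb : 5 ≤ b) (x : ℕ)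
    (hx : x < b ^ 4) (h : diffPair b x = (3 * b / 5, b / 5)) :
    Kap b x = (3 * b / 5) * b ^ 3 + (b / 5 - 1) * b ^ 2 + (4 * b / 5 - 1) * b + 2 * b / 5 ∧
    Kap b ((3 * b / 5) * b ^ 3 + (b / 5 - 1) * b ^ 2 + (4 * b / 5 - 1) * b + 2 * b / 5)
      = (3 * b / 5) * b ^ 3 + (b / 5 - 1) * b ^ 2 + (4 * b / 5 - 1) * b + 2 * b / 5 := by
  obtain ⟨k, rfl⟩ := hb5
  obtain ⟨m, rfl⟩ : ∃ m, k = m + 1 := ⟨k - 1, by omega⟩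
  have d1 : 3 * (5 * (m+1)) / 5 = 3 * (m+1) := by omega
  have d2 : 5 * (m+1) / 5 - 1 = m := by omega
  have d3 : 4 * (5 * (m+1)) / 5 - 1 = 4*m+3 := by omega
  have d4 : 2 * (5 * (m+1)) / 5 = 2*m+2 := by omega
  rw [d1, d2, d3, d4]
  have hF : diffPair (5*(m+1)) (3*(m+1) * (5*(m+1))^3 + m * (5*(m+1))^2 + (4*m+3) * (5*(m+1)) + (2*m+2))
      = (3 * (m+1), m+1) := by
    rw [diffPair, sortedDigits_F]
    simp only [List.getElem!_cons_zero, List.getElem!_cons_succ, Prod.mk.injEq]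
    omega
  have cf : (m + 1 - 1 : ℕ) = m := by omega
  have cf2 : (4 * (m+1) - 1 : ℕ) = 4*m+3 := by omega
  have cf3 : (2 * (m+1) : ℕ) = 2*m+2 := by omega
  constructor
  · have H := kap_key (5*(m+1)) (m+1) x rfl (by omega) (by rw [h, d1]; congr 1; omega)
    rw [cf, cf2, cf3] at H
    exact H
  · have H := kap_key (5*(m+1)) (m+1) _ rfl (by omega) hF
    rw [cf, cf2, cf3] at H
    exact H
end

section
/- Let b ≥ 5 be divisible by 5. If y with 0 ≤ y < b^4 has difference pair equal to one of (4b/5, 3b/5), (4b/5, 2b/5), or (2b/5, b/5), then K_b(y) ≠ F_b. -/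
/-!
Writing the sorted digits as `a ≥ c ≥ d ≥ e`, one has
`K_b(x) = (a - e)(b³ - 1) + (c - d)(b² - b)`, so `K_b(x)` is a function of the difference
pair alone, increasing in both coordinates and strictly in the first. For `b = 5k` the fixed
point is the value at the pair `(3k, k)`; the pairs `(4k, 3k)` and `(4k, 2k)` give strictly
larger values and `(2k, k)` a strictly smaller one.
-/

def kapValue (b : ℕ) (p : ℕ × ℕ) : ℕ := p.1 * (b ^ 3 - 1) + p.2 * (b ^ 2 - b)

theorem exists_sortedDigits_eq (b x : ℕ) :
    ∃ a c d e, sortedDigits b x = [a, c, d, e] ∧ c ≤ a ∧ d ≤ c ∧ e ≤ d := by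
  have hsorted : (sortedDigits b x).Pairwise (· ≥ ·) := List.pairwise_insertionSort _ _
  have hlen : (sortedDigits b x).length = 4 := by
    rw [sortedDigits, List.length_insertionSort]; rfl
  match sortedDigits b x, hsorted, hlen with
  | [a, c, d, e], hsorted, _ =>
    simp only [List.pairwise_cons, List.mem_cons, List.not_mem_nil] at hsorted
    exact ⟨a, c, d, e, rfl, hsorted.1 c (by simp), hsorted.2.1 d (by simp),
      hsorted.2.2.1 e (by simp)⟩

theorem descending_sub_ascending_eq {b a c d e : ℕ} (hb : 0 < b)
    (hca : c ≤ a) (hdc : d ≤ c) (hed : e ≤ d) :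
    (a * b ^ 3 + c * b ^ 2 + d * b + e) - (e * b ^ 3 + d * b ^ 2 + c * b + a) =
      (a - e) * (b ^ 3 - 1) + (c - d) * (b ^ 2 - b) := by
  have hb3 : 1 ≤ b ^ 3 := Nat.one_le_pow _ _ hb
  have hb2 : b ≤ b ^ 2 := Nat.le_self_pow (by norm_num) _
  refine Nat.sub_eq_of_eq_add' ?_
  zify [hb3, hb2, hca.trans' (hed.trans hdc), hdc]
  ring

theorem Kap_eq_kapValue_diffPair {b : ℕ} (hb : 0 < b) (x : ℕ) :
    Kap b x = kapValue b (diffPair b x) := by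
  obtain ⟨a, c, d, e, hl, hca, hdc, hed⟩ := exists_sortedDigits_eq b x
  simp only [Kap, diffPair, kapValue, hl]
  exact descending_sub_ascending_eq hb hca hdc hed

theorem kapValue_lt_kapValue {b : ℕ} (hb : 2 ≤ b) {p q : ℕ × ℕ}
    (h₁ : p.1 < q.1) (h₂ : p.2 ≤ q.2) : kapValue b p < kapValue b q := by
  have hb3 : 0 < b ^ 3 - 1 := by
    have : 8 ≤ b ^ 3 := by simpa using Nat.pow_le_pow_left hb 3
    omega
  exact Nat.add_lt_add_of_lt_of_le (Nat.mul_lt_mul_of_pos_right h₁ hb3)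
    (Nat.mul_le_mul_right _ h₂)

theorem fixedPoint_eq_kapValue {k : ℕ} (hk : 0 < k) :
    (3 * (5 * k) / 5) * (5 * k) ^ 3 + (5 * k / 5 - 1) * (5 * k) ^ 2 +
        (4 * (5 * k) / 5 - 1) * (5 * k) + 2 * (5 * k) / 5 =
      kapValue (5 * k) (3 * k, k) := by
  have hb3 : 1 ≤ (5 * k) ^ 3 := Nat.one_le_pow _ _ (by omega)
  have hb2 : 5 * k ≤ (5 * k) ^ 2 := Nat.le_self_pow (by norm_num) _
  rw [kapValue, show 3 * (5 * k) / 5 = 3 * k by omega, show 5 * k / 5 = k by omega,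
    show 4 * (5 * k) / 5 = 4 * k by omega, show 2 * (5 * k) / 5 = 2 * k by omega]
  zify [hb3, hb2, hk, show 1 ≤ 4 * k by omega]
  ring

theorem kaprekar_predecessor_not_fixed_general (b : ℕ) (hb5 : 5 ∣ b) (hb : 5 ≤ b) (y : ℕ)
    (h : diffPair b y = (4 * b / 5, 3 * b / 5) ∨ diffPair b y = (4 * b / 5, 2 * b / 5) ∨
         diffPair b y = (2 * b / 5, b / 5)) :
    Kap b y ≠ (3 * b / 5) * b ^ 3 + (b / 5 - 1) * b ^ 2 + (4 * b / 5 - 1) * b + 2 * b / 5 := by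
  obtain ⟨k, rfl⟩ := hb5
  rw [Kap_eq_kapValue_diffPair (by omega), fixedPoint_eq_kapValue (by omega)]
  have hb2 : 2 ≤ 5 * k := by omega
  rcases h with h | h | h <;> rw [h]
  · exact (kapValue_lt_kapValue hb2 (by dsimp; omega) (by dsimp; omega)).ne'
  · exact (kapValue_lt_kapValue hb2 (by dsimp; omega) (by dsimp; omega)).ne'
  · exact (kapValue_lt_kapValue hb2 (by dsimp; omega) (by dsimp; omega)).ne

/-- if `5 ∣ b`, `b ≥ 5` and `y` has difference pair `(4b/5, 3b/5)`,
`(4b/5, 2b/5)`, or `(2b/5, b/5)`, then `K_b(y) ≠ F_b`. -/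
theorem kaprekar_predecessor_not_fixed (b : ℕ) (hb5 : 5 ∣ b) (hb : 5 ≤ b) (y : ℕ)
    (hy : y < b ^ 4)
    (h : diffPair b y = (4 * b / 5, 3 * b / 5) ∨ diffPair b y = (4 * b / 5, 2 * b / 5) ∨
         diffPair b y = (2 * b / 5, b / 5)) :
    Kap b y ≠ (3 * b / 5) * b ^ 3 + (b / 5 - 1) * b ^ 2 + (4 * b / 5 - 1) * b + 2 * b / 5 :=
  kaprekar_predecessor_not_fixed_general b hb5 hb y h
end

section
/- Let b ≥ 2 and let (d, d') be integers with 0 < d' < d ≤ b − 1. Then the number of natural numbers x with 0 ≤ x < b^4 whose difference pair equals (d, d') is exactly 24·(b − d)·(d − d'). -/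
lemma kq_ms1 {p a : ℕ} (h : ({p} : Multiset ℕ) = {a}) : p = a := Multiset.singleton_inj.mp h

lemma kq_ms2 {p q x y : ℕ} (h : ({p,q} : Multiset ℕ) = {x,y}) :
    (p = x ∧ q = y) ∨ (p = y ∧ q = x) := by
  have hp : p ∈ ({x,y} : Multiset ℕ) := by rw [← h]; simp
  simp only [Multiset.insert_eq_cons, ← Multiset.cons_zero] at h
  simp only [Multiset.insert_eq_cons, Multiset.mem_cons, Multiset.mem_singleton] at hp
  rcases hp with hp | hp
  · subst hp
    left
    exact ⟨rfl, kq_ms1 ((Multiset.cons_inj_right p).mp h)⟩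
  · subst hp
    rw [Multiset.cons_swap x p] at h
    right
    exact ⟨rfl, kq_ms1 ((Multiset.cons_inj_right p).mp h)⟩

lemma kq_ms3 {p q r x y z : ℕ} (h : ({p,q,r} : Multiset ℕ) = {x,y,z}) :
    (p = x ∧ ((q = y ∧ r = z) ∨ (q = z ∧ r = y))) ∨
    (p = y ∧ ((q = x ∧ r = z) ∨ (q = z ∧ r = x))) ∨
    (p = z ∧ ((q = x ∧ r = y) ∨ (q = y ∧ r = x))) := by
  have hp : p ∈ ({x,y,z} : Multiset ℕ) := by rw [← h]; simp
  simp only [Multiset.insert_eq_cons, ← Multiset.cons_zero] at h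
  simp only [Multiset.insert_eq_cons, Multiset.mem_cons, Multiset.mem_singleton] at hp
  rcases hp with hp | hp | hp
  · subst hp; exact Or.inl ⟨rfl, kq_ms2 ((Multiset.cons_inj_right p).mp h)⟩
  · subst hp
    rw [Multiset.cons_swap x p] at h
    exact Or.inr (Or.inl ⟨rfl, kq_ms2 ((Multiset.cons_inj_right p).mp h)⟩)
  · subst hp
    rw [Multiset.cons_swap y p, Multiset.cons_swap x p] at h
    exact Or.inr (Or.inr ⟨rfl, kq_ms2 ((Multiset.cons_inj_right p).mp h)⟩)

lemma kq_ms4 {p q r s w x y z : ℕ} (h : ({p,q,r,s} : Multiset ℕ) = {w,x,y,z}) :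
    (p = w ∧ ((q = x ∧ ((r = y ∧ s = z) ∨ (r = z ∧ s = y))) ∨
              (q = y ∧ ((r = x ∧ s = z) ∨ (r = z ∧ s = x))) ∨
              (q = z ∧ ((r = x ∧ s = y) ∨ (r = y ∧ s = x))))) ∨
    (p = x ∧ ((q = w ∧ ((r = y ∧ s = z) ∨ (r = z ∧ s = y))) ∨
              (q = y ∧ ((r = w ∧ s = z) ∨ (r = z ∧ s = w))) ∨
              (q = z ∧ ((r = w ∧ s = y) ∨ (r = y ∧ s = w))))) ∨
    (p = y ∧ ((q = w ∧ ((r = x ∧ s = z) ∨ (r = z ∧ s = x))) ∨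
              (q = x ∧ ((r = w ∧ s = z) ∨ (r = z ∧ s = w))) ∨
              (q = z ∧ ((r = w ∧ s = x) ∨ (r = x ∧ s = w))))) ∨
    (p = z ∧ ((q = w ∧ ((r = x ∧ s = y) ∨ (r = y ∧ s = x))) ∨
              (q = x ∧ ((r = w ∧ s = y) ∨ (r = y ∧ s = w))) ∨
              (q = y ∧ ((r = w ∧ s = x) ∨ (r = x ∧ s = w))))) := by
  have hp : p ∈ ({w,x,y,z} : Multiset ℕ) := by rw [← h]; simp
  simp only [Multiset.insert_eq_cons, ← Multiset.cons_zero] at h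
  simp only [Multiset.insert_eq_cons, Multiset.mem_cons, Multiset.mem_singleton] at hp
  rcases hp with hp | hp | hp | hp
  · subst hp; exact Or.inl ⟨rfl, kq_ms3 ((Multiset.cons_inj_right p).mp h)⟩
  · subst hp
    rw [Multiset.cons_swap w p] at h
    exact Or.inr (Or.inl ⟨rfl, kq_ms3 ((Multiset.cons_inj_right p).mp h)⟩)
  · subst hp
    rw [Multiset.cons_swap x p, Multiset.cons_swap w p] at h
    exact Or.inr (Or.inr (Or.inl ⟨rfl, kq_ms3 ((Multiset.cons_inj_right p).mp h)⟩))
  · subst hp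
    rw [Multiset.cons_swap y p, Multiset.cons_swap x p, Multiset.cons_swap w p] at h
    exact Or.inr (Or.inr (Or.inr ⟨rfl, kq_ms3 ((Multiset.cons_inj_right p).mp h)⟩))


section KqAux

lemma kq_step {b x y m : ℕ} (hx : x < b) (hy : y < m) : x + b * y < b * m := by
  have h1 : x + b * y < b + b * y := by omega
  have h2 : b + b * y = b * (y + 1) := by ring
  have h3 : b * (y + 1) ≤ b * m := Nat.mul_le_mul_left b hy
  omega

lemma kq_enc_lt {b t0 t1 t2 t3 : ℕ} (h0 : t0 < b) (h1 : t1 < b) (h2 : t2 < b) (h3 : t3 < b) :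
    t0 + b * t1 + b ^ 2 * t2 + b ^ 3 * t3 < b ^ 4 := by
  have e : t0 + b * t1 + b ^ 2 * t2 + b ^ 3 * t3 = t0 + b * (t1 + b * (t2 + b * t3)) := by ring
  have e4 : b ^ 4 = b * (b * (b * b)) := by ring
  rw [e, e4]
  exact kq_step h0 (kq_step h1 (kq_step h2 h3))

lemma kq_enc_digs {b t0 t1 t2 t3 : ℕ} (hb : 0 < b) (h0 : t0 < b) (h1 : t1 < b) (h2 : t2 < b)
    (h3 : t3 < b) :
    (t0 + b * t1 + b ^ 2 * t2 + b ^ 3 * t3) % b = t0 ∧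
    (t0 + b * t1 + b ^ 2 * t2 + b ^ 3 * t3) / b % b = t1 ∧
    (t0 + b * t1 + b ^ 2 * t2 + b ^ 3 * t3) / b ^ 2 % b = t2 ∧
    (t0 + b * t1 + b ^ 2 * t2 + b ^ 3 * t3) / b ^ 3 % b = t3 := by
  have q1 : (t0 + b * t1 + b ^ 2 * t2 + b ^ 3 * t3) / b = t1 + b * t2 + b ^ 2 * t3 := by
    rw [show t0 + b * t1 + b ^ 2 * t2 + b ^ 3 * t3 = t0 + b * (t1 + b * t2 + b ^ 2 * t3) by ring,
      Nat.add_mul_div_left _ _ hb, Nat.div_eq_of_lt h0, zero_add]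
  have q2 : (t0 + b * t1 + b ^ 2 * t2 + b ^ 3 * t3) / b ^ 2 = t2 + b * t3 := by
    have hd : (t0 + b * t1 + b ^ 2 * t2 + b ^ 3 * t3) / b / b = t2 + b * t3 := by
      rw [q1, show t1 + b * t2 + b ^ 2 * t3 = t1 + b * (t2 + b * t3) by ring,
        Nat.add_mul_div_left _ _ hb, Nat.div_eq_of_lt h1, zero_add]
    conv_rhs => rw [← hd]
    rw [Nat.div_div_eq_div_mul, ← pow_two]
  have q3 : (t0 + b * t1 + b ^ 2 * t2 + b ^ 3 * t3) / b ^ 3 = t3 := by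
    have hd : (t0 + b * t1 + b ^ 2 * t2 + b ^ 3 * t3) / b ^ 2 / b = t3 := by
      rw [q2, Nat.add_mul_div_left _ _ hb, Nat.div_eq_of_lt h2, zero_add]
    conv_rhs => rw [← hd]
    rw [Nat.div_div_eq_div_mul, ← pow_succ]
  refine ⟨?_, ?_, ?_, ?_⟩
  · rw [show t0 + b * t1 + b ^ 2 * t2 + b ^ 3 * t3 = t0 + b * (t1 + b * t2 + b ^ 2 * t3) by ring,
      Nat.add_mul_mod_self_left, Nat.mod_eq_of_lt h0]
  · rw [q1, show t1 + b * t2 + b ^ 2 * t3 = t1 + b * (t2 + b * t3) by ring,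
      Nat.add_mul_mod_self_left, Nat.mod_eq_of_lt h1]
  · rw [q2, Nat.add_mul_mod_self_left, Nat.mod_eq_of_lt h2]
  · rw [q3, Nat.mod_eq_of_lt h3]

lemma kq_decode {b x : ℕ} (hb : 0 < b) (hx : x < b ^ 4) :
    x % b + b * (x / b % b) + b ^ 2 * (x / b ^ 2 % b) + b ^ 3 * (x / b ^ 3 % b) = x := by
  have d1 : x / b / b = x / b ^ 2 := by rw [Nat.div_div_eq_div_mul, ← pow_two]
  have d2 : x / b ^ 2 / b = x / b ^ 3 := by rw [Nat.div_div_eq_div_mul, ← pow_succ]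
  have h1 : x % b + b * (x / b) = x := Nat.mod_add_div x b
  have h2 : x / b % b + b * (x / b ^ 2) = x / b := by rw [← d1]; exact Nat.mod_add_div _ b
  have h3 : x / b ^ 2 % b + b * (x / b ^ 3) = x / b ^ 2 := by rw [← d2]; exact Nat.mod_add_div _ b
  have h4 : x / b ^ 3 % b = x / b ^ 3 := by
    refine Nat.mod_eq_of_lt (Nat.div_lt_of_lt_mul ?_)
    calc x < b ^ 4 := hx
    _ = b ^ 3 * b := by ring
  calc x % b + b * (x / b % b) + b ^ 2 * (x / b ^ 2 % b) + b ^ 3 * (x / b ^ 3 % b)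
      = x % b + b * (x / b % b + b * (x / b ^ 2 % b + b * (x / b ^ 3 % b))) := by ring
    _ = x % b + b * (x / b % b + b * (x / b ^ 2 % b + b * (x / b ^ 3))) := by rw [h4]
    _ = x % b + b * (x / b % b + b * (x / b ^ 2)) := by
        rw [show x / b ^ 2 % b + b * (x / b ^ 3) = x / b ^ 2 from h3]
    _ = x % b + b * (x / b) := by rw [h2]
    _ = x := h1

lemma kq_enc_eq {b n A B C D : ℕ} (hb : 0 < b) (hn : n < b ^ 4) (e0 : n % b = A)
    (e1 : n / b % b = B) (e2 : n / b ^ 2 % b = C) (e3 : n / b ^ 3 % b = D) :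
    A + b * B + b ^ 2 * C + b ^ 3 * D = n := by
  subst e0; subst e1; subst e2; subst e3
  exact kq_decode hb hn

lemma kq_sortedDigits_perm (b x : ℕ) :
    (sortedDigits b x).Perm [x % b, x / b % b, x / b ^ 2 % b, x / b ^ 3 % b] := by
  unfold sortedDigits
  exact List.perm_insertionSort _ _

lemma kq_sortedDigits_sorted (b x : ℕ) : (sortedDigits b x).Pairwise (· ≥ ·) := by
  unfold sortedDigits
  exact List.pairwise_insertionSort _ _

lemma kq_sortedDigits_length (b x : ℕ) : (sortedDigits b x).length = 4 := by
  have := (kq_sortedDigits_perm b x).length_eq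
  simpa using this

lemma kq_len4 (l : List ℕ) (h : l.length = 4) : ∃ p q r s, l = [p, q, r, s] := by
  rcases l with _ | ⟨p, _ | ⟨q, _ | ⟨r, _ | ⟨s, _ | ⟨t, u⟩⟩⟩⟩⟩ <;>
    first
      | exact ⟨p, q, r, s, rfl⟩
      | (simp only [List.length] at h; omega)

lemma kq_sortedDigits_lt {b : ℕ} (hb : 0 < b) (x t : ℕ) (ht : t ∈ sortedDigits b x) : t < b := by
  have hmem := (kq_sortedDigits_perm b x).mem_iff.mp ht
  simp only [List.mem_cons, List.not_mem_nil, or_false] at hmem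
  rcases hmem with h | h | h | h <;> subst h <;> exact Nat.mod_lt _ hb

lemma kq_sortedDigits_eq (b x : ℕ) (M : List ℕ) (hM : M.Pairwise (· ≥ ·))
    (h : (↑[x % b, x / b % b, x / b ^ 2 % b, x / b ^ 3 % b] : Multiset ℕ) = ↑M) :
    sortedDigits b x = M :=
  List.Perm.eq_of_pairwise (fun _ _ _ _ h1 h2 => le_antisymm h2 h1)
    (kq_sortedDigits_sorted b x) hM ((kq_sortedDigits_perm b x).trans (Multiset.coe_eq_coe.mp h))

lemma kq_sortedDigits_ms4 (b n p q r s : ℕ) (h : sortedDigits b n = [p, q, r, s]) :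
    ({n % b, n / b % b, n / b ^ 2 % b, n / b ^ 3 % b} : Multiset ℕ) = {p, q, r, s} := by
  have h2 := kq_sortedDigits_perm b n
  rw [h] at h2
  exact Multiset.coe_eq_coe.mpr h2.symm

lemma kq_diffPair_eq (b x p q r s : ℕ) (h : sortedDigits b x = [p, q, r, s]) :
    diffPair b x = (p - s, q - r) := by
  simp [diffPair, h]

lemma kq_sorted4 {p q r s : ℕ} (h1 : q ≤ p) (h2 : r ≤ q) (h3 : s ≤ r) :
    ([p, q, r, s] : List ℕ).Pairwise (· ≥ ·) := by
  simp only [List.pairwise_cons, List.mem_cons, List.mem_singleton, List.not_mem_nil, or_false,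
    forall_eq_or_imp, forall_eq, List.Pairwise.nil, and_true, ge_iff_le, false_implies,
    implies_true]
  omega

lemma kq_sorted4' {p q r s : ℕ} (h : ([p, q, r, s] : List ℕ).Pairwise (· ≥ ·)) :
    q ≤ p ∧ r ≤ q ∧ s ≤ r := by
  simp only [List.pairwise_cons, List.mem_cons, List.mem_singleton, List.not_mem_nil, or_false,
    forall_eq_or_imp, forall_eq, List.Pairwise.nil, and_true, ge_iff_le, false_implies,
    implies_true] at h
  omega

def kqg (z y x w : ℕ) (p : Fin 4 × Fin 4 × Fin 4) (m : Fin 4) : ℕ :=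
  if m = p.1 then z else if m = p.2.1 then y else if m = p.2.2 then x else w

def kqg2 (u v c : ℕ) (p : Fin 4 × Fin 4) (m : Fin 4) : ℕ :=
  if m = p.1 then u else if m = p.2 then v else c

set_option maxHeartbeats 2000000 in
lemma kq_card_fiber_distinct {b w x y z : ℕ} (hb : 0 < b) (hwx : w < x) (hxy : x < y)
    (hyz : y < z) (hzb : z < b) :
    ((Finset.range (b ^ 4)).filter (fun n => sortedDigits b n = [z, y, x, w])).card = 24 := by
  have hM : ([z, y, x, w] : List ℕ).Pairwise (· ≥ ·) := kq_sorted4 (by omega) (by omega) (by omega)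
  have hgb : ∀ p m, kqg z y x w p m < b := by
    intro p m; unfold kqg; split_ifs <;> omega
  have hdig : ∀ p : Fin 4 × Fin 4 × Fin 4,
      (kqg z y x w p 0 + b * kqg z y x w p 1 + b ^ 2 * kqg z y x w p 2 + b ^ 3 * kqg z y x w p 3) % b = kqg z y x w p 0 ∧
      (kqg z y x w p 0 + b * kqg z y x w p 1 + b ^ 2 * kqg z y x w p 2 + b ^ 3 * kqg z y x w p 3) / b % b = kqg z y x w p 1 ∧
      (kqg z y x w p 0 + b * kqg z y x w p 1 + b ^ 2 * kqg z y x w p 2 + b ^ 3 * kqg z y x w p 3) / b ^ 2 % b = kqg z y x w p 2 ∧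
      (kqg z y x w p 0 + b * kqg z y x w p 1 + b ^ 2 * kqg z y x w p 2 + b ^ 3 * kqg z y x w p 3) / b ^ 3 % b = kqg z y x w p 3 :=
    fun p => kq_enc_digs hb (hgb p 0) (hgb p 1) (hgb p 2) (hgb p 3)
  have hinv : ∀ (p : Fin 4 × Fin 4 × Fin 4) m V, kqg z y x w p m = V →
      (m = p.1 ∧ V = z) ∨ (m ≠ p.1 ∧ m = p.2.1 ∧ V = y) ∨
      (m ≠ p.1 ∧ m ≠ p.2.1 ∧ m = p.2.2 ∧ V = x) ∨
      (m ≠ p.1 ∧ m ≠ p.2.1 ∧ m ≠ p.2.2 ∧ V = w) := by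
    intro p m V h
    unfold kqg at h
    split_ifs at h with a1 a2 a3 <;> tauto
  rw [show (24 : ℕ) = (Finset.univ.filter
      (fun p : Fin 4 × Fin 4 × Fin 4 => p.1 ≠ p.2.1 ∧ p.1 ≠ p.2.2 ∧ p.2.1 ≠ p.2.2)).card
      from by decide]
  refine (Finset.card_bij
    (fun p _ => kqg z y x w p 0 + b * kqg z y x w p 1 + b ^ 2 * kqg z y x w p 2 + b ^ 3 * kqg z y x w p 3)
    ?_ ?_ ?_).symm
  · rintro ⟨i, j, k⟩ hp
    simp only [Finset.mem_filter, Finset.mem_univ, true_and] at hp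
    obtain ⟨hij, hik, hjk⟩ := hp
    obtain ⟨h0, h1, h2, h3⟩ := hdig (i, j, k)
    refine Finset.mem_filter.mpr
      ⟨Finset.mem_range.mpr (kq_enc_lt (hgb _ 0) (hgb _ 1) (hgb _ 2) (hgb _ 3)), ?_⟩
    refine kq_sortedDigits_eq _ _ _ hM ?_
    rw [h0, h1, h2, h3]
    have hg : ∀ m, kqg z y x w (i, j, k) m
        = if m = i then z else if m = j then y else if m = k then x else w := fun m => rfl
    rw [hg 0, hg 1, hg 2, hg 3]
    clear hdig hinv hgb h0 h1 h2 h3 hg hM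
    fin_cases i <;> fin_cases j <;> fin_cases k <;> simp_all (config := { decide := true }) <;>
      (rw [List.perm_iff_count]
       intro a
       simp only [List.count_cons, List.count_nil, beq_iff_eq]
       split_ifs <;> omega)
  · rintro ⟨i, j, k⟩ hp ⟨i', j', k'⟩ hq hf
    simp only [Finset.mem_filter, Finset.mem_univ, true_and] at hp hq
    obtain ⟨hij, hik, hjk⟩ := hp
    obtain ⟨hij', hik', hjk'⟩ := hq
    have e : ∀ m, kqg z y x w (i, j, k) m = kqg z y x w (i', j', k') m := by
      obtain ⟨a0, a1, a2, a3⟩ := hdig (i, j, k)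
      obtain ⟨c0, c1, c2, c3⟩ := hdig (i', j', k')
      have e0 : kqg z y x w (i, j, k) 0 = kqg z y x w (i', j', k') 0 := by
        rw [← a0, ← c0, hf]
      have e1 : kqg z y x w (i, j, k) 1 = kqg z y x w (i', j', k') 1 := by
        rw [← a1, ← c1, hf]
      have e2 : kqg z y x w (i, j, k) 2 = kqg z y x w (i', j', k') 2 := by
        rw [← a2, ← c2, hf]
      have e3 : kqg z y x w (i, j, k) 3 = kqg z y x w (i', j', k') 3 := by
        rw [← a3, ← c3, hf]
      intro m
      fin_cases m
      · exact e0
      · exact e1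
      · exact e2
      · exact e3
    have hLz : kqg z y x w (i, j, k) i = z := by simp [kqg]
    have hLy : kqg z y x w (i, j, k) j = y := by simp [kqg, (Ne.symm hij)]
    have hLx : kqg z y x w (i, j, k) k = x := by simp [kqg, (Ne.symm hik), (Ne.symm hjk)]
    have hi : i = i' := by
      have h := (e i).symm
      rw [hLz] at h
      rcases hinv _ _ _ h with ⟨h1, _⟩ | ⟨_, _, hc⟩ | ⟨_, _, _, hc⟩ | ⟨_, _, _, hc⟩
      · exact h1
      · exact absurd hc (by omega)
      · exact absurd hc (by omega)
      · exact absurd hc (by omega)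
    have hj : j = j' := by
      have h := (e j).symm
      rw [hLy] at h
      rcases hinv _ _ _ h with ⟨_, hc⟩ | ⟨_, h1, _⟩ | ⟨_, _, _, hc⟩ | ⟨_, _, _, hc⟩
      · exact absurd hc (by omega)
      · exact h1
      · exact absurd hc (by omega)
      · exact absurd hc (by omega)
    have hk : k = k' := by
      have h := (e k).symm
      rw [hLx] at h
      rcases hinv _ _ _ h with ⟨_, hc⟩ | ⟨_, _, hc⟩ | ⟨_, _, h1, _⟩ | ⟨_, _, _, hc⟩
      · exact absurd hc (by omega)
      · exact absurd hc (by omega)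
      · exact h1
      · exact absurd hc (by omega)
    rw [hi, hj, hk]
  · intro n hn
    simp only [Finset.mem_filter, Finset.mem_range] at hn
    obtain ⟨hnb, hns⟩ := hn
    have hms := kq_sortedDigits_ms4 b n z y x w hns
    rcases kq_ms4 hms with (⟨e0, (⟨e1, (⟨e2, e3⟩ | ⟨e2, e3⟩)⟩ | ⟨e1, (⟨e2, e3⟩ | ⟨e2, e3⟩)⟩ | ⟨e1, (⟨e2, e3⟩ | ⟨e2, e3⟩)⟩)⟩ | ⟨e0, (⟨e1, (⟨e2, e3⟩ | ⟨e2, e3⟩)⟩ | ⟨e1, (⟨e2, e3⟩ | ⟨e2, e3⟩)⟩ | ⟨e1, (⟨e2, e3⟩ | ⟨e2, e3⟩)⟩)⟩ | ⟨e0, (⟨e1, (⟨e2, e3⟩ | ⟨e2, e3⟩)⟩ | ⟨e1, (⟨e2, e3⟩ | ⟨e2, e3⟩)⟩ | ⟨e1, (⟨e2, e3⟩ | ⟨e2, e3⟩)⟩)⟩ | ⟨e0, (⟨e1, (⟨e2, e3⟩ | ⟨e2, e3⟩)⟩ | ⟨e1, (⟨e2, e3⟩ | ⟨e2, e3⟩)⟩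 | ⟨e1, (⟨e2, e3⟩ | ⟨e2, e3⟩)⟩)⟩)
    · exact ⟨(0, 1, 2), by decide, kq_enc_eq hb hnb e0 e1 e2 e3⟩
    · exact ⟨(0, 1, 3), by decide, kq_enc_eq hb hnb e0 e1 e2 e3⟩
    · exact ⟨(0, 2, 1), by decide, kq_enc_eq hb hnb e0 e1 e2 e3⟩
    · exact ⟨(0, 3, 1), by decide, kq_enc_eq hb hnb e0 e1 e2 e3⟩
    · exact ⟨(0, 2, 3), by decide, kq_enc_eq hb hnb e0 e1 e2 e3⟩
    · exact ⟨(0, 3, 2), by decide, kq_enc_eq hb hnb e0 e1 e2 e3⟩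
    · exact ⟨(1, 0, 2), by decide, kq_enc_eq hb hnb e0 e1 e2 e3⟩
    · exact ⟨(1, 0, 3), by decide, kq_enc_eq hb hnb e0 e1 e2 e3⟩
    · exact ⟨(2, 0, 1), by decide, kq_enc_eq hb hnb e0 e1 e2 e3⟩
    · exact ⟨(3, 0, 1), by decide, kq_enc_eq hb hnb e0 e1 e2 e3⟩
    · exact ⟨(2, 0, 3), by decide, kq_enc_eq hb hnb e0 e1 e2 e3⟩
    · exact ⟨(3, 0, 2), by decide, kq_enc_eq hb hnb e0 e1 e2 e3⟩
    · exact ⟨(1, 2, 0), by decide, kq_enc_eq hb hnb e0 e1 e2 e3⟩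
    · exact ⟨(1, 3, 0), by decide, kq_enc_eq hb hnb e0 e1 e2 e3⟩
    · exact ⟨(2, 1, 0), by decide, kq_enc_eq hb hnb e0 e1 e2 e3⟩
    · exact ⟨(3, 1, 0), by decide, kq_enc_eq hb hnb e0 e1 e2 e3⟩
    · exact ⟨(2, 3, 0), by decide, kq_enc_eq hb hnb e0 e1 e2 e3⟩
    · exact ⟨(3, 2, 0), by decide, kq_enc_eq hb hnb e0 e1 e2 e3⟩
    · exact ⟨(1, 2, 3), by decide, kq_enc_eq hb hnb e0 e1 e2 e3⟩
    · exact ⟨(1, 3, 2), by decide, kq_enc_eq hb hnb e0 e1 e2 e3⟩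
    · exact ⟨(2, 1, 3), by decide, kq_enc_eq hb hnb e0 e1 e2 e3⟩
    · exact ⟨(3, 1, 2), by decide, kq_enc_eq hb hnb e0 e1 e2 e3⟩
    · exact ⟨(2, 3, 1), by decide, kq_enc_eq hb hnb e0 e1 e2 e3⟩
    · exact ⟨(3, 2, 1), by decide, kq_enc_eq hb hnb e0 e1 e2 e3⟩

set_option maxHeartbeats 2000000 in
lemma kq_card_fiber_tie {b u v c : ℕ} (hb : 0 < b) (hub : u < b) (hvb : v < b) (hcb : c < b)
    (huv : u ≠ v) (huc : u ≠ c) (hvc : v ≠ c) (M : List ℕ) (hM : M.Pairwise (· ≥ ·))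
    (hMms : (↑M : Multiset ℕ) = ↑[u, v, c, c]) :
    ((Finset.range (b ^ 4)).filter (fun n => sortedDigits b n = M)).card = 12 := by
  have hgb : ∀ p m, kqg2 u v c p m < b := by
    intro p m; unfold kqg2; split_ifs <;> omega
  have hdig : ∀ p : Fin 4 × Fin 4,
      (kqg2 u v c p 0 + b * kqg2 u v c p 1 + b ^ 2 * kqg2 u v c p 2 + b ^ 3 * kqg2 u v c p 3) % b = kqg2 u v c p 0 ∧
      (kqg2 u v c p 0 + b * kqg2 u v c p 1 + b ^ 2 * kqg2 u v c p 2 + b ^ 3 * kqg2 u v c p 3) / b % b = kqg2 u v c p 1 ∧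
      (kqg2 u v c p 0 + b * kqg2 u v c p 1 + b ^ 2 * kqg2 u v c p 2 + b ^ 3 * kqg2 u v c p 3) / b ^ 2 % b = kqg2 u v c p 2 ∧
      (kqg2 u v c p 0 + b * kqg2 u v c p 1 + b ^ 2 * kqg2 u v c p 2 + b ^ 3 * kqg2 u v c p 3) / b ^ 3 % b = kqg2 u v c p 3 :=
    fun p => kq_enc_digs hb (hgb p 0) (hgb p 1) (hgb p 2) (hgb p 3)
  have hinv : ∀ (p : Fin 4 × Fin 4) m V, kqg2 u v c p m = V →
      (m = p.1 ∧ V = u) ∨ (m ≠ p.1 ∧ m = p.2 ∧ V = v) ∨ (m ≠ p.1 ∧ m ≠ p.2 ∧ V = c) := by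
    intro p m V h
    unfold kqg2 at h
    split_ifs at h with a1 a2 <;> tauto
  rw [show (12 : ℕ) = (Finset.univ.filter
      (fun p : Fin 4 × Fin 4 => p.1 ≠ p.2)).card from by decide]
  refine (Finset.card_bij
    (fun p _ => kqg2 u v c p 0 + b * kqg2 u v c p 1 + b ^ 2 * kqg2 u v c p 2 + b ^ 3 * kqg2 u v c p 3)
    ?_ ?_ ?_).symm
  · rintro ⟨i, j⟩ hp
    simp only [Finset.mem_filter, Finset.mem_univ, true_and] at hp
    obtain ⟨h0, h1, h2, h3⟩ := hdig (i, j)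
    refine Finset.mem_filter.mpr
      ⟨Finset.mem_range.mpr (kq_enc_lt (hgb _ 0) (hgb _ 1) (hgb _ 2) (hgb _ 3)), ?_⟩
    refine kq_sortedDigits_eq _ _ _ hM ?_
    rw [h0, h1, h2, h3, hMms]
    have hg : ∀ m, kqg2 u v c (i, j) m
        = if m = i then u else if m = j then v else c := fun m => rfl
    rw [hg 0, hg 1, hg 2, hg 3]
    clear hdig hinv hgb h0 h1 h2 h3 hg hM hMms
    fin_cases i <;> fin_cases j <;> simp_all (config := { decide := true }) <;>
      (rw [List.perm_iff_count]
       intro a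
       simp only [List.count_cons, List.count_nil, beq_iff_eq]
       split_ifs <;> omega)
  · rintro ⟨i, j⟩ hp ⟨i', j'⟩ hq hf
    simp only [Finset.mem_filter, Finset.mem_univ, true_and] at hp hq
    have e : ∀ m, kqg2 u v c (i, j) m = kqg2 u v c (i', j') m := by
      obtain ⟨a0, a1, a2, a3⟩ := hdig (i, j)
      obtain ⟨c0, c1, c2, c3⟩ := hdig (i', j')
      have e0 : kqg2 u v c (i, j) 0 = kqg2 u v c (i', j') 0 := by
        rw [← a0, ← c0, hf]
      have e1 : kqg2 u v c (i, j) 1 = kqg2 u v c (i', j') 1 := by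
        rw [← a1, ← c1, hf]
      have e2 : kqg2 u v c (i, j) 2 = kqg2 u v c (i', j') 2 := by
        rw [← a2, ← c2, hf]
      have e3 : kqg2 u v c (i, j) 3 = kqg2 u v c (i', j') 3 := by
        rw [← a3, ← c3, hf]
      intro m
      fin_cases m
      · exact e0
      · exact e1
      · exact e2
      · exact e3
    have hLu : kqg2 u v c (i, j) i = u := by simp [kqg2]
    have hLv : kqg2 u v c (i, j) j = v := by simp [kqg2, (Ne.symm hp)]
    have hi : i = i' := by
      have h := (e i).symm
      rw [hLu] at h
      rcases hinv _ _ _ h with ⟨h1, _⟩ | ⟨_, _, hc⟩ | ⟨_, _, hc⟩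
      · exact h1
      · exact absurd hc huv
      · exact absurd hc huc
    have hj : j = j' := by
      have h := (e j).symm
      rw [hLv] at h
      rcases hinv _ _ _ h with ⟨_, hc⟩ | ⟨_, h1, _⟩ | ⟨_, _, hc⟩
      · exact absurd hc.symm huv
      · exact h1
      · exact absurd hc hvc
    rw [hi, hj]
  · intro n hn
    simp only [Finset.mem_filter, Finset.mem_range] at hn
    obtain ⟨hnb, hns⟩ := hn
    obtain ⟨m0, m1, m2, m3, hM4⟩ := kq_len4 M (by
      have hlen := (kq_sortedDigits_perm b n).length_eq
      rw [hns] at hlen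
      simpa using hlen)
    have hms' := kq_sortedDigits_ms4 b n m0 m1 m2 m3 (by rw [hns, hM4])
    have hms : ({n % b, n / b % b, n / b ^ 2 % b, n / b ^ 3 % b} : Multiset ℕ) = {u, v, c, c} := by
      rw [hms']
      rw [hM4] at hMms
      exact hMms
    rcases kq_ms4 hms with (⟨e0, (⟨e1, (⟨e2, e3⟩ | ⟨e2, e3⟩)⟩ | ⟨e1, (⟨e2, e3⟩ | ⟨e2, e3⟩)⟩ | ⟨e1, (⟨e2, e3⟩ | ⟨e2, e3⟩)⟩)⟩ | ⟨e0, (⟨e1, (⟨e2, e3⟩ | ⟨e2, e3⟩)⟩ | ⟨e1, (⟨e2, e3⟩ | ⟨e2, e3⟩)⟩ | ⟨e1, (⟨e2, e3⟩ | ⟨e2, e3⟩)⟩)⟩ | ⟨e0, (⟨e1, (⟨e2, e3⟩ | ⟨e2, e3⟩)⟩ | ⟨e1, (⟨e2, e3⟩ | ⟨e2, e3⟩)⟩ | ⟨e1, (⟨e2, e3⟩ | ⟨e2, e3⟩)⟩)⟩ | ⟨e0, (⟨e1, (⟨e2, e3⟩ | ⟨e2, e3⟩)⟩ | ⟨e1,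 (⟨e2, e3⟩ | ⟨e2, e3⟩)⟩ | ⟨e1, (⟨e2, e3⟩ | ⟨e2, e3⟩)⟩)⟩)
    · exact ⟨(0, 1), by decide, kq_enc_eq hb hnb e0 e1 e2 e3⟩
    · exact ⟨(0, 1), by decide, kq_enc_eq hb hnb e0 e1 e2 e3⟩
    · exact ⟨(0, 2), by decide, kq_enc_eq hb hnb e0 e1 e2 e3⟩
    · exact ⟨(0, 3), by decide, kq_enc_eq hb hnb e0 e1 e2 e3⟩
    · exact ⟨(0, 2), by decide, kq_enc_eq hb hnb e0 e1 e2 e3⟩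
    · exact ⟨(0, 3), by decide, kq_enc_eq hb hnb e0 e1 e2 e3⟩
    · exact ⟨(1, 0), by decide, kq_enc_eq hb hnb e0 e1 e2 e3⟩
    · exact ⟨(1, 0), by decide, kq_enc_eq hb hnb e0 e1 e2 e3⟩
    · exact ⟨(2, 0), by decide, kq_enc_eq hb hnb e0 e1 e2 e3⟩
    · exact ⟨(3, 0), by decide, kq_enc_eq hb hnb e0 e1 e2 e3⟩
    · exact ⟨(2, 0), by decide, kq_enc_eq hb hnb e0 e1 e2 e3⟩
    · exact ⟨(3, 0), by decide, kq_enc_eq hb hnb e0 e1 e2 e3⟩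
    · exact ⟨(1, 2), by decide, kq_enc_eq hb hnb e0 e1 e2 e3⟩
    · exact ⟨(1, 3), by decide, kq_enc_eq hb hnb e0 e1 e2 e3⟩
    · exact ⟨(2, 1), by decide, kq_enc_eq hb hnb e0 e1 e2 e3⟩
    · exact ⟨(3, 1), by decide, kq_enc_eq hb hnb e0 e1 e2 e3⟩
    · exact ⟨(2, 3), by decide, kq_enc_eq hb hnb e0 e1 e2 e3⟩
    · exact ⟨(3, 2), by decide, kq_enc_eq hb hnb e0 e1 e2 e3⟩
    · exact ⟨(1, 2), by decide, kq_enc_eq hb hnb e0 e1 e2 e3⟩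
    · exact ⟨(1, 3), by decide, kq_enc_eq hb hnb e0 e1 e2 e3⟩
    · exact ⟨(2, 1), by decide, kq_enc_eq hb hnb e0 e1 e2 e3⟩
    · exact ⟨(3, 1), by decide, kq_enc_eq hb hnb e0 e1 e2 e3⟩
    · exact ⟨(2, 3), by decide, kq_enc_eq hb hnb e0 e1 e2 e3⟩
    · exact ⟨(3, 2), by decide, kq_enc_eq hb hnb e0 e1 e2 e3⟩

lemma kq_sum_ite (n : ℕ) (hn : 1 ≤ n) :
    (∑ k ∈ Finset.range (n + 1), if k = 0 ∨ k = n then (12 : ℕ) else 24) = 24 * n := by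
  obtain ⟨m, rfl⟩ : ∃ m, n = m + 1 := ⟨n - 1, by omega⟩
  rw [Finset.sum_range_succ, Finset.sum_range_succ']
  have hmid : ∀ i ∈ Finset.range m, (if i + 1 = 0 ∨ i + 1 = m + 1 then (12 : ℕ) else 24) = 24 := by
    intro i hi
    have hi' := Finset.mem_range.mp hi
    rw [if_neg (by omega)]
  rw [Finset.sum_congr rfl hmid, Finset.sum_const, Finset.card_range, smul_eq_mul,
    if_pos (Or.inl rfl), if_pos (Or.inr rfl)]
  ring

end KqAux

/-- for `0 < d' < d ≤ b - 1`, exactly `24(b - d)(d - d')` inputs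
`x < b⁴` have difference pair `(d, d')`. -/
theorem kaprekar_count_diff_pair (b d d' : ℕ) (hb : 2 ≤ b) (h0 : 0 < d')
    (h1 : d' < d) (h2 : d ≤ b - 1) :
    ((Finset.range (b ^ 4)).filter (fun x => diffPair b x = (d, d'))).card
      = 24 * (b - d) * (d - d') := by
  classical
  have hb0 : 0 < b := by omega
  have hpart : (Finset.range (b ^ 4)).filter (fun x => diffPair b x = (d, d'))
      = (Finset.range (b - d) ×ˢ Finset.range (d - d' + 1)).biUnion
          (fun p => (Finset.range (b ^ 4)).filter
            (fun x => sortedDigits b x = [p.1 + d, p.1 + p.2 + d', p.1 + p.2, p.1])) := by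
    ext x
    simp only [Finset.mem_biUnion, Finset.mem_filter, Finset.mem_range, Finset.mem_product]
    constructor
    · rintro ⟨hx, hdp⟩
      obtain ⟨s0, s1, s2, s3, hs⟩ := kq_len4 (sortedDigits b x) (kq_sortedDigits_length b x)
      have hsort := kq_sortedDigits_sorted b x
      rw [hs] at hsort
      obtain ⟨hs01, hs12, hs23⟩ := kq_sorted4' hsort
      have h0b : s0 < b := kq_sortedDigits_lt hb0 x s0 (by rw [hs]; simp)
      have hdp' : s0 - s3 = d ∧ s1 - s2 = d' := by
        have he := kq_diffPair_eq b x s0 s1 s2 s3 hs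
        rw [he] at hdp
        simpa [Prod.ext_iff] using hdp
      refine ⟨(s3, s2 - s3), ⟨by omega, by omega⟩, hx, ?_⟩
      rw [hs]
      simp only [List.cons.injEq, and_true]
      omega
    · rintro ⟨⟨a0, k⟩, ⟨ha0, hk⟩, hx, hsd⟩
      refine ⟨hx, ?_⟩
      rw [kq_diffPair_eq b x _ _ _ _ hsd]
      simp only [Prod.mk.injEq]
      omega
  rw [hpart, Finset.card_biUnion ?hdisj]
  case hdisj =>
    rintro ⟨a0, k⟩ hmem1 ⟨a0', k'⟩ hmem2 hne
    rw [Function.onFun_apply, Finset.disjoint_left]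
    intro x hx1 hx2
    simp only [Finset.mem_filter] at hx1 hx2
    have heq : ([a0 + d, a0 + k + d', a0 + k, a0] : List ℕ)
        = [a0' + d, a0' + k' + d', a0' + k', a0'] := hx1.2.symm.trans hx2.2
    simp only [List.cons.injEq, and_true] at heq
    exact hne (by
      have : a0 = a0' ∧ k = k' := by omega
      simp [Prod.ext_iff, this.1, this.2])
  rw [Finset.sum_product]
  have hinner : ∀ a0 ∈ Finset.range (b - d),
      (∑ k ∈ Finset.range (d - d' + 1), ((Finset.range (b ^ 4)).filter
        (fun x => sortedDigits b x = [a0 + d, a0 + k + d', a0 + k, a0])).card)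
      = 24 * (d - d') := by
    intro a0 ha0
    have ha0' : a0 < b - d := Finset.mem_range.mp ha0
    have hsum : ∀ k ∈ Finset.range (d - d' + 1),
        ((Finset.range (b ^ 4)).filter
          (fun x => sortedDigits b x = [a0 + d, a0 + k + d', a0 + k, a0])).card
        = if k = 0 ∨ k = d - d' then 12 else 24 := by
      intro k hk
      have hk' : k < d - d' + 1 := Finset.mem_range.mp hk
      by_cases hk0 : k = 0
      · subst hk0
        rw [if_pos (Or.inl rfl)]
        refine kq_card_fiber_tie hb0 (u := a0 + d) (v := a0 + 0 + d') (c := a0)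
          (by omega) (by omega) (by omega) (by omega) (by omega) (by omega) _ ?_ ?_
        · exact kq_sorted4 (by omega) (by omega) (by omega)
        · rw [Multiset.coe_eq_coe, List.perm_iff_count]
          intro a
          simp only [List.count_cons, List.count_nil, beq_iff_eq]
          split_ifs <;> omega
      · by_cases hkn : k = d - d'
        · subst hkn
          rw [if_pos (Or.inr rfl)]
          refine kq_card_fiber_tie hb0 (u := a0 + (d - d')) (v := a0) (c := a0 + d)
            (by omega) (by omega) (by omega) (by omega) (by omega) (by omega) _ ?_ ?_
          · exact kq_sorted4 (by omega) (by omega) (by omega)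
          · rw [Multiset.coe_eq_coe, List.perm_iff_count]
            intro a
            simp only [List.count_cons, List.count_nil, beq_iff_eq]
            split_ifs <;> omega
        · rw [if_neg (by tauto)]
          exact kq_card_fiber_distinct hb0 (by omega) (by omega) (by omega) (by omega)
    rw [Finset.sum_congr rfl hsum, kq_sum_ite (d - d') (by omega)]
  rw [Finset.sum_congr rfl hinner, Finset.sum_const, Finset.card_range, smul_eq_mul]
  ring
end

section
/- Let b ≥ 2 and let x, z be natural numbers with 0 ≤ x < b^4 and 0 ≤ z < b^4. If x and z have the same difference pair, then K_b(x) = K_b(z). -/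
/-!
With the sorted digits `a₃ ≥ a₂ ≥ a₁ ≥ a₀`,
`D - A = (a₃ - a₀)(b³ - 1) + (a₂ - a₁)(b² - b)`,
so `K_b(x)` is a function of the difference pair of `x` alone.
-/

lemma exists_sortedDigits_eq_s7 (b x : ℕ) :
    ∃ p q r s : ℕ, sortedDigits b x = [p, q, r, s] ∧ s ≤ r ∧ r ≤ q ∧ q ≤ p := by
  have hsorted : (sortedDigits b x).Pairwise (· ≥ ·) := List.pairwise_insertionSort _ _
  have hlen : (sortedDigits b x).length = 4 := List.length_insertionSort _ _
  match sortedDigits b x, hlen, hsorted with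
  | [p, q, r, s], _, hs =>
    simp only [List.pairwise_cons, List.mem_cons, List.not_mem_nil, or_false, forall_eq_or_imp,
      forall_eq] at hs
    exact ⟨p, q, r, s, rfl, hs.2.2.1, hs.2.1.1, hs.1.1⟩

lemma descending_sub_ascending (p q r s b : ℕ) (hsp : s ≤ p) (hrq : r ≤ q) :
    (p * b ^ 3 + q * b ^ 2 + r * b + s) - (s * b ^ 3 + r * b ^ 2 + q * b + p) =
      (p - s) * (b ^ 3 - 1) + (q - r) * (b ^ 2 - b) := by
  rcases b.eq_zero_or_pos with rfl | hb
  · simpa using Nat.sub_eq_zero_of_le hsp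
  have hb3 : 1 ≤ b ^ 3 := Nat.one_le_pow _ _ hb
  have hb2 : b ≤ b ^ 2 := Nat.le_self_pow two_ne_zero b
  have houter : s * b ^ 3 + p ≤ p * b ^ 3 + s := by nlinarith
  have hinner : r * b ^ 2 + q * b ≤ q * b ^ 2 + r * b := by nlinarith
  have hle : s * b ^ 3 + r * b ^ 2 + q * b + p ≤ p * b ^ 3 + q * b ^ 2 + r * b + s := by omega
  zify [hle, hsp, hrq, hb3, hb2]
  ring

lemma Kap_eq_diffPair (b x : ℕ) :
    Kap b x = (diffPair b x).1 * (b ^ 3 - 1) + (diffPair b x).2 * (b ^ 2 - b) := by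
  obtain ⟨p, q, r, s, hL, hsr, hrq, hqp⟩ := exists_sortedDigits_eq_s7 b x
  simp only [Kap, diffPair, hL, List.getElem!_cons_zero, List.getElem!_cons_succ]
  exact descending_sub_ascending p q r s b (by omega) hrq

theorem kaprekar_same_diff_pair_general (b x z : ℕ) (h : diffPair b x = diffPair b z) :
    Kap b x = Kap b z := by
  rw [Kap_eq_diffPair b x, Kap_eq_diffPair b z, h]

/-- inputs with the same difference pair have the same Kaprekar image. -/
theorem kaprekar_same_diff_pair (b x z : ℕ) (hb : 2 ≤ b) (hx : x < b ^ 4)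
    (hz : z < b ^ 4) (h : diffPair b x = diffPair b z) :
    Kap b x = Kap b z :=
  kaprekar_same_diff_pair_general b x z h
end

section
/- Let b ≥ 2 and let x be a natural number with 0 ≤ x < b^4. Then the difference pair of K_b(x) equals K applied to the difference pair of x, where K denotes the Kaprekar map on base-b difference pairs. -/
set_option maxHeartbeats 1600000

lemma div_add (a m b : ℕ) (hb : 0 < b) (ha : a < b) :
    (a + m * b) / b = m ∧ (a + m * b) % b = a := by
  constructor
  · rw [Nat.add_mul_div_right _ _ hb, Nat.div_eq_of_lt ha, Nat.zero_add]
  · rw [Nat.add_mul_mod_self_right, Nat.mod_eq_of_lt ha]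

/-- digits of N given explicit base-b expansion -/

lemma digits_of (b c0 c1 c2 c3 N : ℕ) (hb : 0 < b)
    (hN : N = c0 + (c1 + (c2 + c3 * b) * b) * b)
    (h0 : c0 < b) (h1 : c1 < b) (h2 : c2 < b) :
    N % b = c0 ∧ N / b % b = c1 ∧ N / b ^ 2 % b = c2 ∧ N / b ^ 3 % b = c3 % b := by
  have e1 := div_add c0 (c1 + (c2 + c3 * b) * b) b hb h0
  have e2 := div_add c1 (c2 + c3 * b) b hb h1
  have e3 := div_add c2 (c3) b hb h2
  have d1 : N / b = c1 + (c2 + c3 * b) * b := by rw [hN, e1.1]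
  have d2 : N / b ^ 2 = c2 + c3 * b := by
    rw [pow_two, ← Nat.div_div_eq_div_mul, d1, e2.1]
  have d3 : N / b ^ 3 = c3 := by
    rw [pow_succ, ← Nat.div_div_eq_div_mul, d2, e3.1]
  refine ⟨by rw [hN]; exact e1.2, by rw [d1]; exact e2.2, by rw [d2]; exact e3.2, by rw [d3]⟩

lemma sorted4 (b x : ℕ) (hb : 2 ≤ b) :
    ∃ l0 l1 l2 l3, sortedDigits b x = [l0, l1, l2, l3] ∧
      l3 ≤ l2 ∧ l2 ≤ l1 ∧ l1 ≤ l0 ∧ l0 < b := by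
  have hbp : 0 < b := by omega
  have h0 : x % b < b := Nat.mod_lt _ hbp
  have h1 : x / b % b < b := Nat.mod_lt _ hbp
  have h2 : x / b ^ 2 % b < b := Nat.mod_lt _ hbp
  have h3 : x / b ^ 3 % b < b := Nat.mod_lt _ hbp
  unfold sortedDigits
  generalize x % b = a0 at *
  generalize x / b % b = a1 at *
  generalize x / b ^ 2 % b = a2 at *
  generalize x / b ^ 3 % b = a3 at *
  simp only [List.insertionSort, List.foldr, List.orderedInsert]
  split_ifs <;> simp only [List.orderedInsert] <;> split_ifs <;>
    simp only [List.orderedInsert] <;> split_ifs <;>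
    exact ⟨_, _, _, _, rfl, by omega, by omega, by omega, by omega⟩

lemma kap_formula (b x l0 l1 l2 l3 : ℕ) (hb : 2 ≤ b)
    (hl : sortedDigits b x = [l0, l1, l2, l3])
    (h32 : l3 ≤ l2) (h21 : l2 ≤ l1) (h10 : l1 ≤ l0) :
    Kap b x = (l0 - l3) * (b ^ 3 - 1) + (l1 - l2) * (b ^ 2 - b) ∧
      diffPair b x = (l0 - l3, l1 - l2) := by
  have hb3 : 1 ≤ b ^ 3 := Nat.one_le_pow _ _ (by omega)
  have hbb : b ≤ b ^ 2 := by nlinarith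
  have hDA : l3 * b ^ 3 + l2 * b ^ 2 + l1 * b + l0 ≤
      l0 * b ^ 3 + l1 * b ^ 2 + l2 * b + l3 := by
    have k : (l0 : ℤ) * b ^ 3 + l1 * b ^ 2 + l2 * b + l3 -
        (l3 * b ^ 3 + l2 * b ^ 2 + l1 * b + l0) =
        ((l0 : ℤ) - l3) * (b ^ 3 - 1) + ((l1 : ℤ) - l2) * (b ^ 2 - b) := by ring
    have t1 : (0:ℤ) ≤ ((l0 : ℤ) - l3) * ((b:ℤ) ^ 3 - 1) :=
      mul_nonneg (sub_nonneg.2 (by exact_mod_cast h32.trans (h21.trans h10)))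
        (sub_nonneg.2 (by exact_mod_cast hb3))
    have t2 : (0:ℤ) ≤ ((l1 : ℤ) - l2) * ((b:ℤ) ^ 2 - (b:ℤ)) :=
      mul_nonneg (sub_nonneg.2 (by exact_mod_cast h21))
        (sub_nonneg.2 (by exact_mod_cast hbb))
    have := k ▸ add_nonneg t1 t2
    -- (0:ℤ) ≤ D - A
    have : ((l3 * b ^ 3 + l2 * b ^ 2 + l1 * b + l0 : ℕ) : ℤ) ≤
        ((l0 * b ^ 3 + l1 * b ^ 2 + l2 * b + l3 : ℕ) : ℤ) := by push_cast; linarith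
    exact_mod_cast this
  constructor
  · show (let l := sortedDigits b x;
      (l[0]! * b ^ 3 + l[1]! * b ^ 2 + l[2]! * b + l[3]!) -
        (l[3]! * b ^ 3 + l[2]! * b ^ 2 + l[1]! * b + l[0]!)) = _
    rw [hl]
    simp
    zify [hDA, h32.trans (h21.trans h10), h21, hb3, hbb]
    ring
  · show (let l := sortedDigits b x; (l[0]! - l[3]!, l[1]! - l[2]!)) = _
    rw [hl]; simp

lemma lemB (b d d' : ℕ) (hb : 2 ≤ b) (hdd : d' ≤ d) (hd : d ≤ b - 1) :
    diffPair b (d * (b ^ 3 - 1) + d' * (b ^ 2 - b)) = Kpair b (d, d') := by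
  have hbp : 0 < b := by omega
  have hb3 : 1 ≤ b ^ 3 := Nat.one_le_pow _ _ hbp
  have hbb : b ≤ b ^ 2 := by nlinarith
  rcases Nat.eq_zero_or_pos d with hd0 | hd1
  · -- d = 0, hence d' = 0, N = 0
    have hd'0 : d' = 0 := by omega
    subst hd0 hd'0
    simp only [Nat.zero_mul, Nat.add_zero]
    have h0 : (0:ℕ) % b = 0 := Nat.zero_mod b
    have h1 : (0:ℕ) / b = 0 := Nat.zero_div b
    unfold diffPair sortedDigits Kpair
    simp [h0, h1]
  · rcases Nat.eq_zero_or_pos d' with hd'0 | hd'1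
    · -- type (c): digits (b-d, b-1, b-1, d-1)
      subst hd'0
      have hN : d * (b ^ 3 - 1) + 0 * (b ^ 2 - b) =
          (b - d) + ((b - 1) + ((b - 1) + (d - 1) * b) * b) * b := by
        zify [hb3, hbb, show d ≤ b by omega, show 1 ≤ d by omega, show 1 ≤ b by omega]
        ring
      obtain ⟨m0, m1, m2, m3⟩ := digits_of b (b - d) (b - 1) (b - 1) (d - 1) _ hbp hN
        (by omega) (by omega) (by omega)
      rw [Nat.mod_eq_of_lt (show d - 1 < b by omega)] at m3
      unfold diffPair sortedDigits
      rw [m0, m1, m2, m3]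
      have hK : Kpair b (d, 0) = sort2 (d - 1, b - d) := by
        simp [Kpair, show d ≠ 0 by omega]
      rw [hK]
      clear hN m0 m1 m2 m3 hK
      simp only [List.insertionSort, List.foldr, List.orderedInsert, sort2]
      split_ifs <;> simp only [List.orderedInsert] <;> split_ifs <;>
        simp only [List.orderedInsert] <;> split_ifs <;>
        simp [Prod.ext_iff] <;> omega
    · -- d ≥ 1, d' ≥ 1: digits (b-d, b-1-d', d'-1, d)
      have hN : d * (b ^ 3 - 1) + d' * (b ^ 2 - b) =
          (b - d) + ((b - 1 - d') + ((d' - 1) + d * b) * b) * b := by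
        zify [hb3, hbb, show d ≤ b by omega, show 1 ≤ d by omega,
          show d' ≤ b - 1 by omega, show 1 ≤ d' by omega, show 1 ≤ b by omega]
        ring
      obtain ⟨m0, m1, m2, m3⟩ := digits_of b (b - d) (b - 1 - d') (d' - 1) d _ hbp hN
        (by omega) (by omega) (by omega)
      rw [Nat.mod_eq_of_lt (show d < b by omega)] at m3
      unfold diffPair sortedDigits
      rw [m0, m1, m2, m3]
      by_cases htype : d = d' ∨ d + d' = b
      · have hK : Kpair b (d, d') =
            sort2 ((2 * (d : ℤ) - ((b : ℤ) - 1)).natAbs, (2 * (d : ℤ) - ((b : ℤ) + 1)).natAbs) := by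
          simp [Kpair, show d ≠ 0 by omega, show d' ≠ 0 by omega, htype]
        rw [hK]
        clear hN m0 m1 m2 m3 hK
        simp only [List.insertionSort, List.foldr, List.orderedInsert, sort2]
        split_ifs <;> simp only [List.orderedInsert] <;> split_ifs <;>
          simp only [List.orderedInsert] <;> split_ifs <;>
          simp [Prod.ext_iff] <;> omega
      · have hK : Kpair b (d, d') =
            sort2 ((2 * (d : ℤ) - (b : ℤ)).natAbs, (2 * (d' : ℤ) - (b : ℤ)).natAbs) := by
          simp [Kpair, show d ≠ 0 by omega, show d' ≠ 0 by omega, htype]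
        rw [hK]
        clear hN m0 m1 m2 m3 hK
        push_neg at htype
        simp only [List.insertionSort, List.foldr, List.orderedInsert, sort2]
        split_ifs <;> simp only [List.orderedInsert] <;> split_ifs <;>
          simp only [List.orderedInsert] <;> split_ifs <;>
          simp [Prod.ext_iff] <;> omega

/-- the difference pair of `K_b(x)` is the Kaprekar map on
difference pairs applied to the difference pair of `x`. -/
theorem kaprekar_diff_pair_commutes (b x : ℕ) (hb : 2 ≤ b) (hx : x < b ^ 4) :
    diffPair b (Kap b x) = Kpair b (diffPair b x) := by
  obtain ⟨l0, l1, l2, l3, hl, h32, h21, h10, hlt⟩ := sorted4 b x hb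
  obtain ⟨hKap, hdiff⟩ := kap_formula b x l0 l1 l2 l3 hb hl h32 h21 h10
  rw [hdiff, hKap]
  exact lemB b (l0 - l3) (l1 - l2) hb (by omega) (by omega)
end

section
/- Let b = 5·2^n with n ≥ 5. For every pair (p, q) with 0 ≤ q < p ≤ 4 and (p, q) ≠ (3, 1), there exists a base-b difference pair (u, v) such that the least L ≥ 0 for which both coordinates of K^L(u, v) are divisible by 2^n satisfies K^L(u, v) = (p·2^n, q·2^n) and L equals exactly: n if (p, q) ∈ {(4, 1), (3, 0), (4, 0)}; 2n if (p, q) ∈ {(4, 2), (2, 0)}; and 2n + 2 if (p, q) ∈ {(1, 0), (2, 1), (3, 2), (4, 3)}. -/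
/-
On a type (a) pair each coordinate moves by the tent map `x ↦ |2x − b|`, so a pair `(c, c')`
with `2c ≤ b` goes to `(b − 2c', b − 2c)` and, after `s` steps, to `(b − 2^s c', b − 2^s c)` as
long as `2^s c ≤ b`. As `2^n ∣ b`, such a pair is divisible by `2^n` exactly when `2^s c` and
`2^s c'` are, so along a doubling run from a pair with an odd coordinate nothing is divisible
before step `n`. For `c ≤ 5` the run lasts `n` steps and ends at `((5 − c')2^n, (5 − c)2^n)`,
which gives the cases of length `n`. For the longer cases the witnesses are chosen so that
their orbits are doubling runs glued together by single type (b) or type (c) steps, each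
producing a pair with an odd or small coordinate; the first divisible time is then the total
length of the chain.
-/

def Avoids {α : Type*} (f : α → α) (P : α → Prop) (x : α) (a : ℕ) (y : α) : Prop :=
  (∀ t < a, ¬ P (f^[t] x)) ∧ f^[a] x = y

def FirstHit {α : Type*} (f : α → α) (P : α → Prop) (x : α) (L : ℕ) (y : α) : Prop :=
  IsLeast {t | P (f^[t] x)} L ∧ f^[L] x = y

section Orbits

variable {α : Type*} {f : α → α} {P : α → Prop} {x x' y z : α} {a c L : ℕ}

theorem firstHit_zero (hx : P x) : FirstHit f P x 0 x :=
  ⟨⟨hx, fun _ _ => Nat.zero_le _⟩, rfl⟩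

theorem Avoids.one (hx : ¬ P x) (hy : f x = y) : Avoids f P x 1 y :=
  ⟨fun t ht => by rwa [Nat.lt_one_iff.mp ht], hy⟩

theorem Avoids.iterate_add (h : Avoids f P x a y) (s : ℕ) : f^[a + s] x = f^[s] y := by
  rw [add_comm, Function.iterate_add_apply, h.2]

theorem Avoids.trans (h₁ : Avoids f P x a y) (h₂ : Avoids f P y c z) :
    Avoids f P x (a + c) z := by
  refine ⟨fun t ht => ?_, by rw [h₁.iterate_add, h₂.2]⟩
  rcases lt_or_ge t a with hta | hta
  · exact h₁.1 t hta
  · obtain ⟨s, rfl⟩ := Nat.exists_eq_add_of_le hta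
    rw [h₁.iterate_add]
    exact h₂.1 s (by omega)

theorem Avoids.firstHit (h₁ : Avoids f P x a y) (h₂ : FirstHit f P y L z) :
    FirstHit f P x (a + L) z := by
  refine ⟨⟨?_, fun t ht => ?_⟩, by rw [h₁.iterate_add, h₂.2]⟩
  · show P (f^[a + L] x)
    rw [h₁.iterate_add]
    exact h₂.1.1
  · rcases lt_or_ge t a with hta | hta
    · exact absurd ht (h₁.1 t hta)
    · obtain ⟨s, rfl⟩ := Nat.exists_eq_add_of_le hta
      have : L ≤ s := h₂.1.2 (show P (f^[s] y) by rw [← h₁.iterate_add]; exact ht)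
      omega

theorem Avoids.of_map_eq (h : Avoids f P x a z) (ha : 0 < a) (hx' : ¬ P x')
    (hf : f x' = f x) : Avoids f P x' a z := by
  have hiter : ∀ s, f^[s + 1] x' = f^[s + 1] x := fun s => by
    rw [Function.iterate_succ_apply, Function.iterate_succ_apply, hf]
  obtain ⟨a, rfl⟩ : ∃ s, a = s + 1 := ⟨a - 1, by omega⟩
  refine ⟨fun t ht => ?_, by rw [hiter, h.2]⟩
  rcases t with _ | t
  · exact hx'
  · rw [hiter]
    exact h.1 _ ht

end Orbits

def DvdPair (m : ℕ) (p : ℕ × ℕ) : Prop := m ∣ p.1 ∧ m ∣ p.2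

theorem not_dvdPair_of_left {m x y : ℕ} (h : ¬ m ∣ x) : ¬ DvdPair m (x, y) :=
  fun h' => h h'.1

theorem not_dvdPair_of_right {m x y : ℕ} (h : ¬ m ∣ y) : ¬ DvdPair m (x, y) :=
  fun h' => h h'.2

theorem not_two_pow_dvd_two_pow_mul_odd {n t m : ℕ} (ht : t < n) (hm : Odd m) :
    ¬ 2 ^ n ∣ 2 ^ t * m := by
  rw [← pow_mul_pow_sub 2 ht.le, Nat.mul_dvd_mul_iff_left (by positivity)]
  exact fun h => hm.not_two_dvd_nat (dvd_trans (dvd_pow_self 2 (by omega)) h)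

theorem Odd.not_two_pow_dvd {n m : ℕ} (hn : 0 < n) (hm : Odd m) : ¬ 2 ^ n ∣ m := by
  simpa using not_two_pow_dvd_two_pow_mul_odd hn hm

theorem not_two_pow_dvd_sub_two_pow_mul_odd {n t m b : ℕ} (hb : 2 ^ n ∣ b) (ht : t < n)
    (hm : Odd m) (hle : 2 ^ t * m ≤ b) : ¬ 2 ^ n ∣ b - 2 ^ t * m := by
  rw [Nat.dvd_sub_iff_right hle hb]
  exact not_two_pow_dvd_two_pow_mul_odd ht hm

section Kpair

variable {b c c' x y s : ℕ}

theorem Kpair_of_typeA (hy : y ≠ 0) (hxy : x ≠ y) (hsum : x + y ≠ b) :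
    Kpair b (x, y) = sort2 ((2 * (x : ℤ) - b).natAbs, (2 * (y : ℤ) - b).natAbs) := by
  simp [Kpair, hy, hxy, hsum]

theorem Kpair_of_snd_eq_zero (hx : x ≠ 0) : Kpair b (x, 0) = sort2 (x - 1, b - x) := by
  simp [Kpair, hx]

theorem Kpair_of_add_eq (hsum : x + y = b) (hy : 0 < y) (hyx : y < x) :
    Kpair b (x, y) = (x - y + 1, x - y - 1) := by
  simp only [Kpair, sort2, hsum, or_true, if_true, if_neg (show ¬ (x = 0 ∧ y = 0) by omega),
    if_neg (show y ≠ 0 by omega), Prod.mk.injEq]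
  omega

theorem Kpair_sub_fst (hy : y ≠ 0) (hxy : x ≠ y) (hsum : x + y ≠ b) (hx : x ≤ b) :
    Kpair b (b - x, y) = Kpair b (x, y) := by
  rw [Kpair_of_typeA hy (by omega) (by omega), Kpair_of_typeA hy hxy hsum]
  congr 2
  omega

theorem Kpair_of_two_mul_le (hc' : 0 < c') (hc : c' < c) (h : 2 * c ≤ b) :
    Kpair b (c, c') = (b - 2 * c', b - 2 * c) := by
  rw [Kpair_of_typeA (by omega) (by omega) (by omega)]
  simp only [sort2, Prod.mk.injEq]
  omega

theorem Kpair_sub_sub_of_two_mul_le (hc' : 0 < c') (hc : c' < c) (h : 2 * c ≤ b) :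
    Kpair b (b - c', b - c) = (b - 2 * c', b - 2 * c) := by
  rw [Kpair_of_typeA (by omega) (by omega) (by omega)]
  simp only [sort2, Prod.mk.injEq]
  omega

theorem Kpair_iterate_of_two_pow_mul_le (hc' : 0 < c') (hc : c' < c) (hs : 0 < s)
    (h : 2 ^ s * c ≤ b) : (Kpair b)^[s] (c, c') = (b - 2 ^ s * c', b - 2 ^ s * c) := by
  induction s, hs using Nat.le_induction with
  | base => simpa using Kpair_of_two_mul_le hc' hc (by simpa using h)
  | succ s hs ih =>
    have hpow : 2 ^ (s + 1) = 2 * 2 ^ s := by ring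
    rw [hpow] at h ⊢
    rw [Function.iterate_succ_apply', ih (by nlinarith [Nat.one_le_two_pow (n := s)]),
      Kpair_sub_sub_of_two_mul_le (by positivity) (Nat.mul_lt_mul_of_pos_left hc (by positivity))
        (by linarith), mul_assoc, mul_assoc]

variable {n : ℕ}

theorem avoids_of_two_pow_mul_le (hb : 2 ^ n ∣ b) (hc' : 0 < c') (hc : c' < c)
    (hodd : Odd c ∨ Odd c') (hs : 0 < s) (hsn : s ≤ n) (h : 2 ^ s * c ≤ b) :
    Avoids (Kpair b) (DvdPair (2 ^ n)) (c, c') s (b - 2 ^ s * c', b - 2 ^ s * c) := by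
  refine ⟨fun t ht => ?_, Kpair_iterate_of_two_pow_mul_le hc' hc hs h⟩
  have hle : 2 ^ t * c ≤ b :=
    le_trans (Nat.mul_le_mul_right c (Nat.pow_le_pow_right two_pos ht.le)) h
  rcases t with _ | t
  · rcases hodd with hodd | hodd
    · exact not_dvdPair_of_left (hodd.not_two_pow_dvd (by omega))
    · exact not_dvdPair_of_right (hodd.not_two_pow_dvd (by omega))
  · rw [Kpair_iterate_of_two_pow_mul_le hc' hc (Nat.succ_pos t) hle]
    rcases hodd with hodd | hodd
    · exact not_dvdPair_of_right
        (not_two_pow_dvd_sub_two_pow_mul_odd hb (by omega) hodd hle)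
    · exact not_dvdPair_of_left (not_two_pow_dvd_sub_two_pow_mul_odd hb (by omega) hodd
        (le_trans (Nat.mul_le_mul_left _ hc.le) hle))

theorem avoids_sub_succ (hb : 2 ^ n ∣ b) (hy : ¬ 2 ^ n ∣ y) (hs : 0 < s) (hsn : s ≤ n)
    (h : 2 ^ s * (y + 1) ≤ b) :
    Avoids (Kpair b) (DvdPair (2 ^ n)) (b - (y + 1), y) s (b - 2 ^ s * y, b - 2 ^ s * (y + 1)) := by
  have hy0 : y ≠ 0 := by rintro rfl; exact hy (dvd_zero _)
  have h2y : 2 * (y + 1) ≤ b := le_trans (Nat.mul_le_mul_right _ (Nat.le_self_pow hs.ne' 2)) h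
  exact (avoids_of_two_pow_mul_le hb (by omega) (Nat.lt_succ_self y)
      ((Nat.even_or_odd y).imp Even.add_one id) hs hsn h).of_map_eq hs
    (not_dvdPair_of_right hy) (Kpair_sub_fst hy0 (by omega) (by omega) (by omega))

theorem avoids_of_snd_eq_zero (hb : 2 ^ n ∣ b) (hc : 2 ≤ c) (hcn : c < 2 ^ n) (hs : 0 < s)
    (hsn : s ≤ n) (h : 2 ^ s * c ≤ b) :
    Avoids (Kpair b) (DvdPair (2 ^ n)) (c, 0) (s + 1)
      (b - 2 ^ s * (c - 1), b - 2 ^ s * c) := by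
  obtain ⟨y, rfl⟩ : ∃ y, c = y + 1 := ⟨c - 1, by omega⟩
  have h2c : 2 * (y + 1) ≤ b := le_trans (Nat.mul_le_mul_right _ (Nat.le_self_pow hs.ne' 2)) h
  have hstep : Kpair b (y + 1, 0) = (b - (y + 1), y) := by
    rw [Kpair_of_snd_eq_zero (by omega)]
    simp only [sort2, Prod.mk.injEq]
    omega
  rw [Nat.add_sub_cancel, add_comm s 1]
  exact (Avoids.one (not_dvdPair_of_left (Nat.not_dvd_of_pos_of_lt (by omega) hcn)) hstep).trans
    (avoids_sub_succ hb (Nat.not_dvd_of_pos_of_lt (by omega) (by omega)) hs hsn h)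

end Kpair

section FiveTwoPow

variable {n c c' p q : ℕ}

theorem firstHit_of_le_five (hn : 0 < n) (hc' : 0 < c') (hc : c' < c) (hc5 : c ≤ 5)
    (hodd : Odd c ∨ Odd c') (hp : p + c' = 5) (hq : q + c = 5) :
    FirstHit (Kpair (5 * 2 ^ n)) (DvdPair (2 ^ n)) (c, c') n (p * 2 ^ n, q * 2 ^ n) := by
  have hrun := avoids_of_two_pow_mul_le (dvd_mul_left _ 5) hc' hc hodd hn le_rfl
    (by rw [mul_comm]; exact Nat.mul_le_mul_right _ hc5)
  rw [Nat.sub_eq_of_eq_add (by rw [← hp]; ring : 5 * 2 ^ n = p * 2 ^ n + 2 ^ n * c'),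
    Nat.sub_eq_of_eq_add (by rw [← hq]; ring : 5 * 2 ^ n = q * 2 ^ n + 2 ^ n * c)] at hrun
  exact hrun.firstHit (firstHit_zero ⟨dvd_mul_left _ _, dvd_mul_left _ _⟩)

theorem firstHit_snd_eq_zero_of_le_five (hn : 3 ≤ n) (hc : 2 ≤ c) (hc5 : c ≤ 5)
    (hp : p + (c - 1) = 5) (hq : q + c = 5) :
    FirstHit (Kpair (5 * 2 ^ n)) (DvdPair (2 ^ n)) (c, 0) (n + 1) (p * 2 ^ n, q * 2 ^ n) := by
  have h8 : 2 ^ 3 ≤ 2 ^ n := Nat.pow_le_pow_right two_pos hn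
  have hrun := avoids_of_snd_eq_zero (b := 5 * 2 ^ n) (s := n) (dvd_mul_left _ _) hc
    (by omega) (by omega) le_rfl (by rw [mul_comm]; exact Nat.mul_le_mul_right _ hc5)
  rw [Nat.sub_eq_of_eq_add (by rw [← hp]; ring : 5 * 2 ^ n = p * 2 ^ n + 2 ^ n * (c - 1)),
    Nat.sub_eq_of_eq_add (by rw [← hq]; ring : 5 * 2 ^ n = q * 2 ^ n + 2 ^ n * c)] at hrun
  exact hrun.firstHit (firstHit_zero ⟨dvd_mul_left _ _, dvd_mul_left _ _⟩)

theorem firstHit_fifteen_five (hn : 3 ≤ n) :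
    FirstHit (Kpair (5 * 2 ^ n)) (DvdPair (2 ^ n)) (15, 5) (2 * n) (4 * 2 ^ n, 2 * 2 ^ n) := by
  have hrun := avoids_of_two_pow_mul_le (b := 5 * 2 ^ n) (c := 15) (c' := 5) (s := n - 2)
    (dvd_mul_left _ _) (by norm_num) (by norm_num) (Or.inl (by decide)) (by omega) (by omega)
    (by rw [← pow_mul_pow_sub 2 (show 2 ≤ n by omega)]; omega)
  have hnd : ¬ 2 ^ n ∣ 5 * 2 ^ (n - 2) := by
    rw [mul_comm]; exact not_two_pow_dvd_two_pow_mul_odd (by omega) (by decide)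
  set A := 2 ^ (n - 2)
  have hA : 2 ^ n = 4 * A := by rw [← pow_mul_pow_sub 2 (show 2 ≤ n by omega)]; rfl
  have hA2 : 2 ≤ A := Nat.le_self_pow (by omega) 2
  rw [show 5 * 2 ^ n - A * 5 = 15 * A by omega, show 5 * 2 ^ n - A * 15 = 5 * A by omega] at hrun
  have h₁ : Kpair (5 * 2 ^ n) (15 * A, 5 * A) = (10 * A + 1, 10 * A - 1) := by
    rw [Kpair_of_add_eq (by omega) (by omega) (by omega)]; congr 1 <;> omega
  have h₂ : Kpair (5 * 2 ^ n) (10 * A + 1, 10 * A - 1) = (3, 1) := by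
    rw [Kpair_of_add_eq (by omega) (by omega) (by omega)]; congr 1 <;> omega
  have := ((hrun.trans (.one (not_dvdPair_of_right hnd) h₁)).trans
    (.one (not_dvdPair_of_left (Odd.not_two_pow_dvd (by omega) ⟨5 * A, by ring⟩)) h₂)).firstHit
    (firstHit_of_le_five (by omega) (by norm_num) (by norm_num) (by norm_num)
      (Or.inl (by decide)) (p := 4) (q := 2) rfl rfl)
  rwa [show n - 2 + 1 + 1 + n = 2 * n by omega] at this

theorem firstHit_thirtyfive_five (hn : 4 ≤ n) :
    FirstHit (Kpair (5 * 2 ^ n)) (DvdPair (2 ^ n)) (35, 5) (2 * n) (2 * 2 ^ n, 0 * 2 ^ n) := by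
  have hrun := avoids_of_two_pow_mul_le (b := 5 * 2 ^ n) (c := 35) (c' := 5) (s := n - 3)
    (dvd_mul_left _ _) (by norm_num) (by norm_num) (Or.inl (by decide)) (by omega) (by omega)
    (by rw [← pow_mul_pow_sub 2 (show 3 ≤ n by omega)]; omega)
  have hnd₀ : ¬ 2 ^ n ∣ 5 * 2 ^ (n - 3) := by
    rw [mul_comm]; exact not_two_pow_dvd_two_pow_mul_odd (by omega) (by decide)
  set A := 2 ^ (n - 3)
  have hA : 2 ^ n = 8 * A := by rw [← pow_mul_pow_sub 2 (show 3 ≤ n by omega)]; rfl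
  have hA2 : 2 ≤ A := Nat.le_self_pow (by omega) 2
  rw [show 5 * 2 ^ n - A * 5 = 35 * A by omega, show 5 * 2 ^ n - A * 35 = 5 * A by omega] at hrun
  have h₁ : Kpair (5 * 2 ^ n) (35 * A, 5 * A) = (30 * A + 1, 30 * A - 1) := by
    rw [Kpair_of_add_eq (by omega) (by omega) (by omega)]; congr 1 <;> omega
  have h₂ : Kpair (5 * 2 ^ n) (30 * A + 1, 30 * A - 1) = (20 * A + 2, 20 * A - 2) := by
    rw [Kpair_of_typeA (by omega) (by omega) (by omega)]
    simp only [sort2, Prod.mk.injEq]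
    omega
  have h₃ : Kpair (5 * 2 ^ n) (20 * A + 2, 20 * A - 2) = (5, 3) := by
    rw [Kpair_of_add_eq (by omega) (by omega) (by omega)]; congr 1 <;> omega
  have hnd₁ : ¬ 2 ^ n ∣ 30 * A + 1 := Odd.not_two_pow_dvd (by omega) ⟨15 * A, by ring⟩
  have hnd₂ : ¬ 2 ^ n ∣ 20 * A + 2 := by
    rw [show 20 * A + 2 = 2 ^ 1 * (10 * A + 1) by ring]
    exact not_two_pow_dvd_two_pow_mul_odd (by omega) ⟨5 * A, by ring⟩
  have := (((hrun.trans (.one (not_dvdPair_of_right hnd₀) h₁)).trans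
    (.one (not_dvdPair_of_left hnd₁) h₂)).trans (.one (not_dvdPair_of_left hnd₂) h₃)).firstHit
    (firstHit_of_le_five (by omega) (by norm_num) (by norm_num) le_rfl (Or.inl (by decide))
      (p := 2) (q := 0) rfl rfl)
  rwa [show n - 3 + 1 + 1 + 1 + n = 2 * n by omega] at this

theorem avoids_ten_five (hn : 2 ≤ n) :
    Avoids (Kpair (5 * 2 ^ n)) (DvdPair (2 ^ n)) (10, 5) (n + 1) (2, 0) := by
  have hrun := avoids_of_two_pow_mul_le (b := 5 * 2 ^ n) (c := 10) (c' := 5) (s := n - 1)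
    (dvd_mul_left _ _) (by norm_num) (by norm_num) (Or.inr (by decide)) (by omega) (by omega)
    (by rw [← pow_mul_pow_sub 2 (show 1 ≤ n by omega)]; omega)
  have hnd : ¬ 2 ^ n ∣ 5 * 2 ^ (n - 1) := by
    rw [mul_comm]; exact not_two_pow_dvd_two_pow_mul_odd (by omega) (by decide)
  set A := 2 ^ (n - 1)
  have hA : 2 ^ n = 2 * A := by rw [← pow_mul_pow_sub 2 (show 1 ≤ n by omega)]; rfl
  have hA2 : 2 ≤ A := Nat.le_self_pow (by omega) 2
  rw [show 5 * 2 ^ n - A * 5 = 5 * A by omega, show 5 * 2 ^ n - A * 10 = 0 by omega] at hrun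
  have h₁ : Kpair (5 * 2 ^ n) (5 * A, 0) = (5 * A, 5 * A - 1) := by
    rw [Kpair_of_snd_eq_zero (by omega)]
    simp only [sort2, Prod.mk.injEq]
    omega
  have h₂ : Kpair (5 * 2 ^ n) (5 * A, 5 * A - 1) = (2, 0) := by
    rw [Kpair_of_typeA (by omega) (by omega) (by omega)]
    simp only [sort2, Prod.mk.injEq]
    omega
  have := (hrun.trans (.one (not_dvdPair_of_left hnd) h₁)).trans
    (.one (not_dvdPair_of_left hnd) h₂)
  rwa [show n - 1 + 1 + 1 = n + 1 by omega] at this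

/- With `y = 5·2^(n-k)`, the orbit is: `n - k` doublings to `(b - y, 0)`, a type (c) step to
`(b - (y + 1), y)`, `k - 1` doublings to `(b/2, b/2 - 2^(k-1))`, and one step to `(2^k, 0)`. -/
theorem avoids_five_mul_two_pow {k : ℕ} (hk : 2 ≤ k) (hkn : k < n) :
    Avoids (Kpair (5 * 2 ^ n)) (DvdPair (2 ^ n)) (5 * 2 ^ k, 5) (n + 1) (2 ^ k, 0) := by
  have hy : 2 ^ (n - k) * (5 * 2 ^ k) = 5 * 2 ^ n := by
    rw [mul_left_comm, ← pow_add, Nat.sub_add_cancel hkn.le]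
  have hQy : 2 ^ (k - 1) * (2 ^ (n - k) * 5) = 5 * 2 ^ (n - 1) := by
    rw [← mul_assoc, ← pow_add, mul_comm]; congr 2; omega
  have hy4 : 2 ^ (n - k) * 4 ≤ 2 ^ n := by
    rw [show 4 = 2 ^ 2 by rfl, ← pow_add]; exact Nat.pow_le_pow_right two_pos (by omega)
  have hH : 2 ^ n = 2 * 2 ^ (n - 1) := by rw [← pow_succ']; congr 1; omega
  have hQ : 2 ^ k = 2 * 2 ^ (k - 1) := by rw [← pow_succ']; congr 1; omega
  have hQH : 2 ^ (k - 1) < 2 ^ (n - 1) := Nat.pow_lt_pow_right one_lt_two (by omega)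
  have hE : 0 < 2 ^ (n - k) := by positivity
  have hQ0 : 0 < 2 ^ (k - 1) := by positivity
  have hnd₁ : ¬ 2 ^ n ∣ 2 ^ (n - k) * 5 := not_two_pow_dvd_two_pow_mul_odd (by omega) (by decide)
  have hnd₁' : ¬ 2 ^ n ∣ 5 * 2 ^ n - 2 ^ (n - k) * 5 :=
    not_two_pow_dvd_sub_two_pow_mul_odd (dvd_mul_left _ _) (by omega) (by decide) (by omega)
  have hnd₂ : ¬ 2 ^ n ∣ 5 * 2 ^ n - 5 * 2 ^ (n - 1) := by
    rw [mul_comm 5 (2 ^ (n - 1))]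
    exact not_two_pow_dvd_sub_two_pow_mul_odd (dvd_mul_left _ _) (by omega) (by decide)
      (by omega)
  have hrun₁ := avoids_of_two_pow_mul_le (b := 5 * 2 ^ n) (c := 5 * 2 ^ k) (c' := 5)
    (s := n - k) (dvd_mul_left _ _) (by norm_num) (by omega) (Or.inr (by decide)) (by omega)
    (by omega) hy.le
  have hrun₂ := avoids_sub_succ (b := 5 * 2 ^ n) (s := k - 1) (dvd_mul_left _ _) hnd₁
    (by omega) (by omega) (by rw [mul_add, hQy]; omega)
  rw [hy, Nat.sub_self] at hrun₁
  rw [mul_add, hQy, mul_one] at hrun₂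
  set y := 2 ^ (n - k) * 5
  set Q := 2 ^ (k - 1)
  set H := 2 ^ (n - 1)
  have h₁ : Kpair (5 * 2 ^ n) (5 * 2 ^ n - y, 0) = (5 * 2 ^ n - (y + 1), y) := by
    rw [Kpair_of_snd_eq_zero (by omega)]
    simp only [sort2, Prod.mk.injEq]
    omega
  have h₂ : Kpair (5 * 2 ^ n) (5 * 2 ^ n - 5 * H, 5 * 2 ^ n - (5 * H + Q)) = (2 ^ k, 0) := by
    rw [Kpair_of_typeA (by omega) (by omega) (by omega)]
    simp only [sort2, Prod.mk.injEq]
    omega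
  have := ((hrun₁.trans (.one (not_dvdPair_of_left hnd₁') h₁)).trans hrun₂).trans
    (.one (not_dvdPair_of_left hnd₂) h₂)
  rwa [show n - k + 1 + (k - 1) + 1 = n + 1 by omega] at this

theorem firstHit_eight_zero (hn : 4 ≤ n) :
    FirstHit (Kpair (5 * 2 ^ n)) (DvdPair (2 ^ n)) (8, 0) (n + 1) (3 * 2 ^ n, 2 * 2 ^ n) := by
  have h16 : 2 ^ 4 ≤ 2 ^ n := Nat.pow_le_pow_right two_pos hn
  have hrun := avoids_of_snd_eq_zero (b := 5 * 2 ^ n) (c := 8) (s := n - 1) (dvd_mul_left _ _)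
    (by norm_num) (by omega) (by omega) (by omega)
    (by rw [← pow_mul_pow_sub 2 (show 1 ≤ n by omega)]; omega)
  have hnd : ¬ 2 ^ n ∣ 3 * 2 ^ (n - 1) := by
    rw [mul_comm]; exact not_two_pow_dvd_two_pow_mul_odd (by omega) (by decide)
  set A := 2 ^ (n - 1)
  have hA : 2 ^ n = 2 * A := by rw [← pow_mul_pow_sub 2 (show 1 ≤ n by omega)]; rfl
  rw [show 5 * 2 ^ n - A * (8 - 1) = 3 * A by omega, show 5 * 2 ^ n - A * 8 = 2 * A by omega]
    at hrun
  have h₁ : Kpair (5 * 2 ^ n) (3 * A, 2 * A) = (3 * 2 ^ n, 2 * 2 ^ n) := by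
    rw [Kpair_of_typeA (by omega) (by omega) (by omega)]
    simp only [sort2, Prod.mk.injEq]
    omega
  have := (hrun.trans (.one (not_dvdPair_of_left hnd) h₁)).firstHit
    (firstHit_zero ⟨dvd_mul_left _ _, dvd_mul_left _ _⟩)
  rwa [show n - 1 + 1 + 1 + 0 = n + 1 by omega] at this

theorem firstHit_sixteen_zero (hn : 5 ≤ n) :
    FirstHit (Kpair (5 * 2 ^ n)) (DvdPair (2 ^ n)) (16, 0) (n + 1) (1 * 2 ^ n, 0 * 2 ^ n) := by
  have h32 : 2 ^ 5 ≤ 2 ^ n := Nat.pow_le_pow_right two_pos hn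
  have hrun := avoids_of_snd_eq_zero (b := 5 * 2 ^ n) (c := 16) (s := n - 2) (dvd_mul_left _ _)
    (by norm_num) (by omega) (by omega) (by omega)
    (by rw [← pow_mul_pow_sub 2 (show 2 ≤ n by omega)]; omega)
  have hnd₁ : ¬ 2 ^ n ∣ 5 * 2 ^ (n - 2) := by
    rw [mul_comm]; exact not_two_pow_dvd_two_pow_mul_odd (by omega) (by decide)
  have hnd₂ : ¬ 2 ^ n ∣ 10 * 2 ^ (n - 2) := by
    rw [show 10 * 2 ^ (n - 2) = 2 ^ (n - 1) * 5 by
      rw [show n - 1 = n - 2 + 1 by omega, pow_succ]; ring]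
    exact not_two_pow_dvd_two_pow_mul_odd (by omega) (by decide)
  set A := 2 ^ (n - 2)
  have hA : 2 ^ n = 4 * A := by rw [← pow_mul_pow_sub 2 (show 2 ≤ n by omega)]; rfl
  rw [show 5 * 2 ^ n - A * (16 - 1) = 5 * A by omega, show 5 * 2 ^ n - A * 16 = 4 * A by omega]
    at hrun
  have h₁ : Kpair (5 * 2 ^ n) (5 * A, 4 * A) = (12 * A, 10 * A) := by
    rw [Kpair_of_typeA (by omega) (by omega) (by omega)]
    simp only [sort2, Prod.mk.injEq]
    omega
  have h₂ : Kpair (5 * 2 ^ n) (12 * A, 10 * A) = (1 * 2 ^ n, 0 * 2 ^ n) := by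
    rw [Kpair_of_typeA (by omega) (by omega) (by omega)]
    simp only [sort2, Prod.mk.injEq]
    omega
  have := ((hrun.trans (.one (not_dvdPair_of_left hnd₁) h₁)).trans
    (.one (not_dvdPair_of_right hnd₂) h₂)).firstHit
    (firstHit_zero ⟨dvd_mul_left _ _, dvd_mul_left _ _⟩)
  rwa [show n - 2 + 1 + 1 + 1 + 0 = n + 1 by omega] at this

end FiveTwoPow

/-- for `b = 5·2^n`, `n ≥ 5`, the bounds of
Proposition "predecessor length" are attained for every `(p, q)`. -/
theorem kaprekar_predecessor_length_tight (n b : ℕ) (hn : 5 ≤ n)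
    (hb : b = 5 * 2 ^ n) (p q : ℕ) (hq : q < p) (hp : p ≤ 4)
    (hne : (p, q) ≠ (3, 1)) :
    ∃ u v L : ℕ, IsDiffPair b (u, v) ∧
      IsLeast {t : ℕ | 2 ^ n ∣ ((Kpair b)^[t] (u, v)).1 ∧
                       2 ^ n ∣ ((Kpair b)^[t] (u, v)).2} L ∧
      (Kpair b)^[L] (u, v) = (p * 2 ^ n, q * 2 ^ n) ∧
      L = (if (p, q) = (4, 1) ∨ (p, q) = (3, 0) ∨ (p, q) = (4, 0) then n
           else if (p, q) = (4, 2) ∨ (p, q) = (2, 0) then 2 * n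
           else 2 * n + 2) := by
  subst hb
  suffices ∃ u v L, v ≤ u ∧ u ≤ 80 ∧
      FirstHit (Kpair (5 * 2 ^ n)) (DvdPair (2 ^ n)) (u, v) L (p * 2 ^ n, q * 2 ^ n) ∧
      L = (if (p, q) = (4, 1) ∨ (p, q) = (3, 0) ∨ (p, q) = (4, 0) then n
           else if (p, q) = (4, 2) ∨ (p, q) = (2, 0) then 2 * n
           else 2 * n + 2) by
    obtain ⟨u, v, L, hvu, hu, h, hL⟩ := this
    have h32 : 2 ^ 5 ≤ 2 ^ n := Nat.pow_le_pow_right two_pos hn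
    exact ⟨u, v, L, ⟨hvu, by omega⟩, h.1, h.2, hL⟩
  interval_cases p <;> interval_cases q
  · exact ⟨80, 5, _, by norm_num, le_rfl,
      (avoids_five_mul_two_pow (k := 4) (by norm_num) (by omega)).firstHit
        (firstHit_sixteen_zero hn), by simp; omega⟩
  · exact ⟨35, 5, _, by norm_num, by norm_num, firstHit_thirtyfive_five (by omega), by simp⟩
  · exact ⟨20, 5, _, by norm_num, by norm_num,
      (avoids_five_mul_two_pow (k := 2) le_rfl (by omega)).firstHit
        (firstHit_snd_eq_zero_of_le_five (by omega) (by norm_num) (by norm_num) rfl rfl),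
      by simp; omega⟩
  · exact ⟨5, 2, _, by norm_num, by norm_num, firstHit_of_le_five (by omega) (by norm_num)
      (by norm_num) le_rfl (Or.inl (by decide)) rfl rfl, by simp⟩
  · exact absurd rfl hne
  · exact ⟨40, 5, _, by norm_num, by norm_num,
      (avoids_five_mul_two_pow (k := 3) (by norm_num) (by omega)).firstHit
        (firstHit_eight_zero (by omega)), by simp; omega⟩
  · exact ⟨5, 1, _, by norm_num, by norm_num, firstHit_of_le_five (by omega) (by norm_num)
      (by norm_num) le_rfl (Or.inl (by decide)) rfl rfl, by simp⟩
  · exact ⟨4, 1, _, by norm_num, by norm_num, firstHit_of_le_five (by omega) (by norm_num)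
      (by norm_num) (by norm_num) (Or.inr (by decide)) rfl rfl, by simp⟩
  · exact ⟨15, 5, _, by norm_num, by norm_num, firstHit_fifteen_five (by omega), by simp⟩
  · exact ⟨10, 5, _, by norm_num, by norm_num, (avoids_ten_five (by omega)).firstHit
      (firstHit_snd_eq_zero_of_le_five (by omega) le_rfl (by norm_num) rfl rfl), by simp; omega⟩
end

section
/- Let n ≥ 2 and let b > 4 be divisible by 2^n, and let t satisfy 1 ≤ t ≤ n. Suppose (u, v) and (2^t·c, 2^t·d) are base-b difference pairs with (c, d) ≠ (0, 0), and K^t(u, v) = (2^t·c, 2^t·d). Then there exist odd integers i, j with 1 ≤ i, j ≤ 2^t and signs ε₁, ε₂ ∈ {−1, +1} such that, as unordered pairs, {u, v} = {b·i/2^t + ε₁·c, b·j/2^t + ε₂·d}. -/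
/-!
When `b` is even, a pair of types (b) or (c) is sent to a pair with an odd coordinate
(for type (c) the coordinates add up to `b - 1`), so a pair whose image is even and nonzero
is of type (a), and each coordinate `w` of it satisfies `2w - b = ±w'` for a coordinate `w'`
of the image. Going back `t` steps from `(2^t c, 2^t d)` the coordinates stay even, because
`2^t ∣ b`, and each backward step `w = (b ± w') / 2` turns `w' = b i / 2^s ± 2c` with `i` odd
into `w = b (2^s ± i) / 2^(s+1) ± c`, again with an odd numerator.
-/

theorem isDiffPair_Kpair {b : ℕ} {p : ℕ × ℕ} (hp : IsDiffPair b p) :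
    IsDiffPair b (Kpair b p) := by
  obtain ⟨x, y⟩ := p
  obtain ⟨h1, h2⟩ := hp
  unfold Kpair sort2 IsDiffPair
  split_ifs <;> dsimp only at * <;> omega

theorem Kpair_iterate_zero (b t : ℕ) : (Kpair b)^[t] (0, 0) = (0, 0) :=
  Function.iterate_fixed (by simp [Kpair]) t

theorem sym2_natAbs_eq_of_Kpair_eq {b u v x y : ℕ} (hb : Even b) (huv : IsDiffPair b (u, v))
    (hx : Even x) (hy : Even y) (hxy : (x, y) ≠ (0, 0)) (h : Kpair b (u, v) = (x, y)) :
    s((2 * (u : ℤ) - b).natAbs, (2 * (v : ℤ) - b).natAbs) = s(x, y) := by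
  obtain ⟨huv1, huv2⟩ := huv
  obtain ⟨k, rfl⟩ := hb
  obtain ⟨m, rfl⟩ := hx
  obtain ⟨n, rfl⟩ := hy
  unfold Kpair sort2 at h
  rw [Sym2.eq_iff]
  split_ifs at h <;> simp only [ne_eq, Prod.mk.injEq] at * <;> omega

def IsShiftedOddMultiple (b t c w : ℕ) : Prop :=
  ∃ i : ℕ, Odd i ∧ 1 ≤ i ∧ i ≤ 2 ^ t ∧
    ∃ ε : ℤ, (ε = 1 ∨ ε = -1) ∧ (w : ℤ) * 2 ^ t = b * i + ε * c * 2 ^ t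

theorem isShiftedOddMultiple_one_of_natAbs_eq {b c w : ℕ}
    (h : (2 * (w : ℤ) - b).natAbs = 2 * c) : IsShiftedOddMultiple b 1 c w := by
  refine ⟨1, odd_one, le_rfl, by norm_num, ?_⟩
  rcases Int.natAbs_eq (2 * (w : ℤ) - b) with hw | hw <;> rw [h] at hw
  · exact ⟨1, Or.inl rfl, by push_cast at hw; linear_combination hw⟩
  · exact ⟨-1, Or.inr rfl, by push_cast at hw; linear_combination hw⟩

theorem IsShiftedOddMultiple.even {b t c w : ℕ} (h : IsShiftedOddMultiple b t (2 * c) w)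
    (hb : 2 ^ (t + 1) ∣ b) : Even w := by
  obtain ⟨i, -, -, -, ε, -, hw⟩ := h
  obtain ⟨k, rfl⟩ := hb
  have : (w : ℤ) = 2 * (k * i + ε * c) :=
    mul_right_cancel₀ (pow_ne_zero t two_ne_zero) (by push_cast at hw; rw [hw]; ring)
  exact (Int.even_coe_nat w).1 ⟨_, this.trans (two_mul _)⟩

theorem IsShiftedOddMultiple.of_natAbs_eq {b t c w w' : ℕ} (ht : 1 ≤ t)
    (h : IsShiftedOddMultiple b t (2 * c) w') (hw : (2 * (w : ℤ) - b).natAbs = w') :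
    IsShiftedOddMultiple b (t + 1) c w := by
  obtain ⟨i, hi, hi1, hit, ε, hε, hw'⟩ := h
  have h2t : Even (2 ^ t) := Nat.even_pow.2 ⟨even_two, by omega⟩
  have hit' : i < 2 ^ t := lt_of_le_of_ne hit fun h ↦ Nat.not_even_iff_odd.2 hi (h ▸ h2t)
  rcases Int.natAbs_eq (2 * (w : ℤ) - b) with hw₂ | hw₂ <;> rw [hw] at hw₂
  · refine ⟨2 ^ t + i, h2t.add_odd hi, by omega, by rw [pow_succ]; omega, ε, hε, ?_⟩
    push_cast at hw' ⊢
    linear_combination (2 : ℤ) ^ t * hw₂ + hw'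
  · refine ⟨2 ^ t - i, Nat.Even.sub_odd hit h2t hi, by omega, by rw [pow_succ]; omega,
      -ε, by rcases hε with rfl | rfl <;> simp, ?_⟩
    push_cast [hit] at hw' ⊢
    linear_combination (2 : ℤ) ^ t * hw₂ - hw'

theorem exists_sym2_eq_of_sym2_map_eq {α β : Type*} {f : α → β} {P Q : α → Prop} {u v : α}
    {x y : β} (h : s(f u, f v) = s(x, y)) (hP : ∀ w, f w = x → P w)
    (hQ : ∀ w, f w = y → Q w) : ∃ p q, P p ∧ Q q ∧ s(u, v) = s(p, q) := by
  rcases Sym2.eq_iff.1 h with ⟨hu, hv⟩ | ⟨hu, hv⟩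
  · exact ⟨u, v, hP u hu, hQ v hv, rfl⟩
  · exact ⟨v, u, hP v hv, hQ u hu, Sym2.eq_swap⟩

theorem exists_isShiftedOddMultiple_of_Kpair_iterate_eq {b t c d u v : ℕ} (ht : 1 ≤ t)
    (hb : 2 ^ t ∣ b) (huv : IsDiffPair b (u, v)) (hcd : (c, d) ≠ (0, 0))
    (hK : (Kpair b)^[t] (u, v) = (2 ^ t * c, 2 ^ t * d)) :
    ∃ p q, IsShiftedOddMultiple b t c p ∧ IsShiftedOddMultiple b t d q ∧ s(u, v) = s(p, q) := by
  induction t, ht using Nat.le_induction generalizing c d u v with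
  | base =>
    rw [pow_one] at hb hK
    have hK' := sym2_natAbs_eq_of_Kpair_eq (even_iff_two_dvd.2 hb) huv (even_two_mul c)
      (even_two_mul d) (by simpa using hcd) hK
    exact exists_sym2_eq_of_sym2_map_eq hK' (fun _ ↦ isShiftedOddMultiple_one_of_natAbs_eq)
      (fun _ ↦ isShiftedOddMultiple_one_of_natAbs_eq)
  | succ t ht ih =>
    obtain ⟨u', v', huv'⟩ : ∃ u' v', Kpair b (u, v) = (u', v') := ⟨_, _, rfl⟩
    have hK' : (Kpair b)^[t] (u', v') = (2 ^ t * (2 * c), 2 ^ t * (2 * d)) := by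
      rw [← huv', ← Function.iterate_succ_apply, hK, pow_succ]
      simp only [mul_assoc, mul_comm 2]
    have hcd' : (2 * c, 2 * d) ≠ (0, 0) := by simpa using hcd
    obtain ⟨p, q, hp, hq, hpq⟩ := ih ((pow_dvd_pow 2 t.le_succ).trans hb)
      (huv' ▸ isDiffPair_Kpair huv) hcd' hK'
    have hu'v' : Even u' ∧ Even v' := by
      rcases Sym2.eq_iff.1 hpq with ⟨rfl, rfl⟩ | ⟨rfl, rfl⟩
      exacts [⟨hp.even hb, hq.even hb⟩, ⟨hq.even hb, hp.even hb⟩]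
    have hne : (u', v') ≠ (0, 0) := by
      rintro ⟨⟩
      exact hcd' (by simpa [Kpair_iterate_zero] using hK'.symm)
    have hb2 : Even b := even_iff_two_dvd.2 ((dvd_pow_self 2 t.succ_ne_zero).trans hb)
    exact exists_sym2_eq_of_sym2_map_eq
      ((sym2_natAbs_eq_of_Kpair_eq hb2 huv hu'v'.1 hu'v'.2 hne huv').trans hpq)
      (fun _ ↦ hp.of_natAbs_eq ht) (fun _ ↦ hq.of_natAbs_eq ht)

/-- The conclusion `{u, v} = {b·i/2^t ± c, b·j/2^t ± d}` (as unordered pairs) is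
expressed multiplied through by `2^t` to stay in the integers. -/
theorem kaprekar_type_a_predecessors_general (n b t c d u v : ℕ)
    (hdvd : 2 ^ n ∣ b) (ht1 : 1 ≤ t) (htn : t ≤ n)
    (huv : IsDiffPair b (u, v))
    (hne : (c, d) ≠ (0, 0))
    (hK : (Kpair b)^[t] (u, v) = (2 ^ t * c, 2 ^ t * d)) :
    ∃ i j : ℕ, Odd i ∧ Odd j ∧ 1 ≤ i ∧ i ≤ 2 ^ t ∧ 1 ≤ j ∧ j ≤ 2 ^ t ∧
      ∃ ε₁ ε₂ : ℤ, (ε₁ = 1 ∨ ε₁ = -1) ∧ (ε₂ = 1 ∨ ε₂ = -1) ∧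
        (((u : ℤ) * 2 ^ t = (b : ℤ) * i + ε₁ * c * 2 ^ t ∧
          (v : ℤ) * 2 ^ t = (b : ℤ) * j + ε₂ * d * 2 ^ t) ∨
         ((v : ℤ) * 2 ^ t = (b : ℤ) * i + ε₁ * c * 2 ^ t ∧
          (u : ℤ) * 2 ^ t = (b : ℤ) * j + ε₂ * d * 2 ^ t)) := by
  obtain ⟨p, q, ⟨i, hi, hi1, hit, ε₁, hε₁, hp⟩, ⟨j, hj, hj1, hjt, ε₂, hε₂, hq⟩, hpq⟩ :=
    exists_isShiftedOddMultiple_of_Kpair_iterate_eq ht1 ((pow_dvd_pow 2 htn).trans hdvd) huv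
      hne hK
  refine ⟨i, j, hi, hj, hi1, hit, hj1, hjt, ε₁, ε₂, hε₁, hε₂, ?_⟩
  rcases Sym2.eq_iff.1 hpq with ⟨rfl, rfl⟩ | ⟨rfl, rfl⟩
  exacts [Or.inl ⟨hp, hq⟩, Or.inr ⟨hp, hq⟩]

/-- form of the `t`-fold preimages of `(2^t·c, 2^t·d)`.
The conclusion `{u, v} = {b·i/2^t ± c, b·j/2^t ± d}` (as unordered pairs) is
expressed multiplied through by `2^t` to stay in the integers. -/
theorem kaprekar_type_a_predecessors (n b t c d u v : ℕ) (hn : 2 ≤ n)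
    (hb4 : 4 < b) (hdvd : 2 ^ n ∣ b) (ht1 : 1 ≤ t) (htn : t ≤ n)
    (huv : IsDiffPair b (u, v)) (hcd : IsDiffPair b (2 ^ t * c, 2 ^ t * d))
    (hne : (c, d) ≠ (0, 0))
    (hK : (Kpair b)^[t] (u, v) = (2 ^ t * c, 2 ^ t * d)) :
    ∃ i j : ℕ, Odd i ∧ Odd j ∧ 1 ≤ i ∧ i ≤ 2 ^ t ∧ 1 ≤ j ∧ j ≤ 2 ^ t ∧
      ∃ ε₁ ε₂ : ℤ, (ε₁ = 1 ∨ ε₁ = -1) ∧ (ε₂ = 1 ∨ ε₂ = -1) ∧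
        (((u : ℤ) * 2 ^ t = (b : ℤ) * i + ε₁ * c * 2 ^ t ∧
          (v : ℤ) * 2 ^ t = (b : ℤ) * j + ε₂ * d * 2 ^ t) ∨
         ((v : ℤ) * 2 ^ t = (b : ℤ) * i + ε₁ * c * 2 ^ t ∧
          (u : ℤ) * 2 ^ t = (b : ℤ) * j + ε₂ * d * 2 ^ t)) :=
  kaprekar_type_a_predecessors_general n b t c d u v hdvd ht1 htn huv hne hK
end

section
/- Let b = 5·2^n with n ≥ 2, and let x be an integer with 1 ≤ x ≤ b − 1 such that 2^n does not divide x. If (u, v) is a base-b difference pair and L ≥ 0 satisfies K^L(u, v) = (x, 0), then L ≤ n + 1. -/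
def DepthLE {α : Type*} (f : α → α) (S : Set α) (q : α) (m : ℕ) : Prop :=
  ∀ p ∈ S, ∀ L, f^[L] p = q → L ≤ m

theorem depthLE_of_forall_preimage {α : Type*} {f : α → α} {S : Set α} {q : α} {m : ℕ}
    (hS : Set.MapsTo f S S) (h : ∀ r ∈ S, f r = q → ∃ m' < m, DepthLE f S r m') :
    DepthLE f S q m := by
  rintro p hp (_ | L) hL
  · exact Nat.zero_le m
  · rw [Function.iterate_succ_apply'] at hL
    obtain ⟨m', hm', hr⟩ := h _ (hS.iterate L hp) hL
    have := hr p hp L rfl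
    omega

def TwoPowExactDvd (k c : ℕ) : Prop := 2 ^ k ∣ c ∧ ¬ 2 ^ (k + 1) ∣ c

theorem TwoPowExactDvd.ne_zero {k c : ℕ} (h : TwoPowExactDvd k c) : c ≠ 0 := by
  rintro rfl
  exact h.2 (dvd_zero _)

theorem twoPowExactDvd_two_pow_mul {k m : ℕ} (hm : Odd m) : TwoPowExactDvd k (2 ^ k * m) := by
  refine ⟨dvd_mul_right _ _, fun h => ?_⟩
  rw [pow_succ, mul_dvd_mul_iff_left (by positivity)] at h
  exact (Nat.not_even_iff_odd.mpr hm) (even_iff_two_dvd.mpr h)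

theorem exists_twoPowExactDvd {c : ℕ} (hc : c ≠ 0) : ∃ k, TwoPowExactDvd k c := by
  obtain ⟨k, m, hm, rfl⟩ := Nat.exists_eq_two_pow_mul_odd hc
  exact ⟨k, twoPowExactDvd_two_pow_mul hm⟩

theorem twoPowExactDvd_succ_two_mul_iff {k c : ℕ} :
    TwoPowExactDvd (k + 1) (2 * c) ↔ TwoPowExactDvd k c := by
  simp only [TwoPowExactDvd, pow_succ' 2 (k + 1), pow_succ' 2 k,
    mul_dvd_mul_iff_left two_ne_zero]

theorem TwoPowExactDvd.sub {b k s : ℕ} (hb : 2 ^ (k + 1) ∣ b) (hs : TwoPowExactDvd k s)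
    (hsb : s ≤ b) : TwoPowExactDvd k (b - s) := by
  refine ⟨Nat.dvd_sub ((pow_dvd_pow 2 k.le_succ).trans hb) hs.1, fun h => hs.2 ?_⟩
  simpa [Nat.sub_sub_self hsb] using Nat.dvd_sub hb h

def fold (b : ℤ) (c : ℕ) : ℕ := (2 * c - b).natAbs

theorem even_fold_iff {b : ℤ} {c : ℕ} : Even (fold b c) ↔ Even b := by
  simp [fold, Int.natAbs_even, Int.even_sub, parity_simps]

theorem fold_eq_zero_iff {b : ℤ} {c : ℕ} : fold b c = 0 ↔ 2 * (c : ℤ) = b := by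
  simp [fold, sub_eq_zero]

theorem dvd_fold_iff {b : ℤ} {c d : ℕ} : d ∣ fold b c ↔ (d : ℤ) ∣ 2 * c - b :=
  Int.natCast_dvd.symm

theorem even_fold_sub_one_iff {b : ℤ} {c : ℕ} : Even (fold (b - 1) c) ↔ ¬ Even b :=
  even_fold_iff.trans Int.even_sub_one

theorem even_fold_add_one_iff {b : ℤ} {c : ℕ} : Even (fold (b + 1) c) ↔ ¬ Even b :=
  even_fold_iff.trans Int.even_add_one

theorem dvd_fold_iff_of_odd {b c d : ℕ} (hd : Odd d) (hdb : d ∣ b) : d ∣ fold b c ↔ d ∣ c := by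
  have hd2 : IsCoprime (d : ℤ) 2 := Int.isCoprime_two_right.mpr (by exact_mod_cast hd)
  rw [dvd_fold_iff, dvd_sub_left (Int.natCast_dvd_natCast.mpr hdb), ← Int.natCast_dvd_natCast]
  exact ⟨hd2.dvd_of_dvd_mul_left, fun h => h.mul_left 2⟩

theorem two_mul_dvd_fold_iff {a b c : ℕ} (h : 2 * a ∣ b) : 2 * a ∣ fold b c ↔ a ∣ c := by
  rw [dvd_fold_iff, dvd_sub_left (Int.natCast_dvd_natCast.mpr h), Nat.cast_mul, Nat.cast_two,
    mul_dvd_mul_iff_left two_ne_zero, Int.natCast_dvd_natCast]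

theorem twoPowExactDvd_fold_iff {b k c : ℕ} (hb : 2 ^ (k + 2) ∣ b) :
    TwoPowExactDvd (k + 1) (fold b c) ↔ TwoPowExactDvd k c := by
  have h1 : 2 * 2 ^ k ∣ b := by
    rw [← pow_succ']
    exact (pow_dvd_pow 2 (by omega)).trans hb
  rw [pow_succ' 2 (k + 1)] at hb
  rw [TwoPowExactDvd, TwoPowExactDvd, pow_succ' 2 (k + 1), two_mul_dvd_fold_iff hb,
    pow_succ' 2 k, two_mul_dvd_fold_iff h1]

def InSomeOrder (P : ℕ → ℕ → Prop) (q : ℕ × ℕ) : Prop := P q.1 q.2 ∨ P q.2 q.1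

theorem inSomeOrder_sort2 {P : ℕ → ℕ → Prop} {p : ℕ × ℕ} :
    InSomeOrder P (sort2 p) ↔ InSomeOrder P p := by
  rcases le_total p.2 p.1 with h | h <;> simp [InSomeOrder, sort2, h, or_comm]

theorem InSomeOrder.of_map {P Q : ℕ → ℕ → Prop} {g : ℕ → ℕ} {r : ℕ × ℕ}
    (h : ∀ a c, P (g a) (g c) → Q a c) (hr : InSomeOrder P (g r.1, g r.2)) :
    InSomeOrder Q r :=
  hr.imp (h _ _) (h _ _)

theorem mapsTo_kpair (b : ℕ) :
    Set.MapsTo (Kpair b) {p | IsDiffPair b p} {p | IsDiffPair b p} := by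
  rintro p ⟨h21, h1b⟩
  have sorted {a c : ℕ} (ha : a ≤ b - 1) (hc : c ≤ b - 1) : IsDiffPair b (sort2 (a, c)) :=
    ⟨min_le_max, max_le ha hc⟩
  unfold Kpair
  split_ifs
  · exact ⟨le_rfl, Nat.zero_le _⟩
  all_goals exact sorted (by omega) (by omega)

theorem inSomeOrder_of_kpair {b : ℕ} {P : ℕ → ℕ → Prop} {r : ℕ × ℕ}
    (h : InSomeOrder P (Kpair b r)) :
    r = (0, 0) ∧ P 0 0 ∨
    r.2 = 0 ∧ r.1 ≠ 0 ∧ InSomeOrder P (r.1 - 1, b - r.1) ∨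
    InSomeOrder P (fold (b - 1) r.1, fold (b + 1) r.1) ∨
    InSomeOrder P (fold b r.1, fold b r.2) := by
  unfold Kpair at h
  split_ifs at h with h0 hc
  · exact Or.inl ⟨Prod.ext h0.1 h0.2, h.elim id id⟩
  · exact Or.inr <| Or.inl ⟨hc, fun h1 => h0 ⟨h1, hc⟩, inSomeOrder_sort2.mp h⟩
  · exact Or.inr <| Or.inr <| Or.inl <| inSomeOrder_sort2.mp h
  · exact Or.inr <| Or.inr <| Or.inr <| inSomeOrder_sort2.mp h

theorem depthLE_zero_of_odd {b f : ℕ} (hf : Odd f) (hfb : f ≠ b - 1) :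
    DepthLE (Kpair b) {p | IsDiffPair b p} (f, 0) 0 := by
  refine depthLE_of_forall_preimage (mapsTo_kpair b) fun r hr hrf => ?_
  have hq : InSomeOrder (fun a c => a = 0 ∧ c = f) (Kpair b r) := Or.inr (by simp [hrf])
  have hf' : ¬ Even f := Nat.not_even_iff_odd.mpr hf
  exfalso
  rcases inSomeOrder_of_kpair hq with ⟨-, -, rfl⟩ | ⟨-, hr1, h⟩ | h | h
  · exact hf' Even.zero
  · have := hr.2
    simp only [InSomeOrder] at h
    omega
  -- in both remaining cases the two outputs have the same parity, unlike `0` and `f`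
  · have hpar : Even (fold (b - 1) r.1) ↔ Even (fold (b + 1) r.1) :=
      even_fold_sub_one_iff.trans even_fold_add_one_iff.symm
    simp only [InSomeOrder] at h
    rcases h with ⟨h0, rfl⟩ | ⟨h0, rfl⟩ <;> rw [h0] at hpar <;> simp_all
  · simp only [InSomeOrder] at h
    rcases h with ⟨h0, rfl⟩ | ⟨h0, rfl⟩ <;>
      exact hf' (even_fold_iff.mpr (even_fold_iff.mp (h0 ▸ Even.zero)))

theorem exists_pred_of_kpair_five_dvd {b k : ℕ} {r : ℕ × ℕ} (h5 : 5 ∣ b)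
    (hk : 2 ^ (k + 1) ∣ b) (hr : IsDiffPair b r)
    (hq : InSomeOrder (fun a c => 5 ∣ a ∧ 5 ∣ c ∧ TwoPowExactDvd k a) (Kpair b r)) :
    ∃ k', k = k' + 1 ∧ InSomeOrder (fun a c => 5 ∣ a ∧ 5 ∣ c ∧ TwoPowExactDvd k' a) r := by
  rcases inSomeOrder_of_kpair hq with ⟨-, -, -, h⟩ | ⟨-, hr1, h⟩ | h | h
  · exact absurd rfl h.ne_zero
  · have := hr.2
    simp only [InSomeOrder] at h
    omega
  · simp only [InSomeOrder, dvd_fold_iff] at h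
    omega
  · cases k with
    | zero =>
      have h2 (c : ℕ) : 2 ^ (0 + 1) ∣ fold b c :=
        even_iff_two_dvd.mp (even_fold_iff.mpr (by exact_mod_cast even_iff_two_dvd.mpr hk))
      rcases h with ⟨-, -, -, h⟩ | ⟨-, -, -, h⟩ <;> exact absurd (h2 _) h
    | succ k =>
      refine ⟨k, rfl, h.of_map fun a c ⟨ha, hc, hka⟩ => ?_⟩
      exact ⟨(dvd_fold_iff_of_odd (by decide) h5).mp ha,
        (dvd_fold_iff_of_odd (by decide) h5).mp hc, (twoPowExactDvd_fold_iff hk).mp hka⟩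

theorem depthLE_of_five_dvd {b k : ℕ} (h5 : 5 ∣ b) (hk : 2 ^ (k + 1) ∣ b) {q : ℕ × ℕ}
    (hq : InSomeOrder (fun a c => 5 ∣ a ∧ 5 ∣ c ∧ TwoPowExactDvd k a) q) :
    DepthLE (Kpair b) {p | IsDiffPair b p} q k := by
  induction k generalizing q with
  | zero =>
    refine depthLE_of_forall_preimage (mapsTo_kpair b) fun r hr hrq => ?_
    obtain ⟨k', hk', -⟩ := exists_pred_of_kpair_five_dvd h5 hk hr (hrq ▸ hq)
    omega
  | succ k ih =>
    refine depthLE_of_forall_preimage (mapsTo_kpair b) fun r hr hrq => ?_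
    obtain ⟨k', hk', hr'⟩ := exists_pred_of_kpair_five_dvd h5 hk hr (hrq ▸ hq)
    obtain rfl : k = k' := by omega
    exact ⟨k, k.lt_succ_self, ih ((pow_dvd_pow 2 k.succ.le_succ).trans hk) hr'⟩

theorem depthLE_of_five_dvd_not_five_dvd {b k w : ℕ} (h5 : 5 ∣ b) (hk : 2 ^ (k + 1) ∣ b)
    (hwk : w < k) {q : ℕ × ℕ}
    (hq : InSomeOrder
      (fun a c => 5 ∣ a ∧ TwoPowExactDvd k a ∧ ¬ 5 ∣ c ∧ TwoPowExactDvd w c) q) :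
    DepthLE (Kpair b) {p | IsDiffPair b p} q (k + 1) := by
  induction k generalizing w q with
  | zero => omega
  | succ k ih =>
  refine depthLE_of_forall_preimage (mapsTo_kpair b) fun r hr hrq => ?_
  have hb2 : Even (b : ℤ) := by
    exact_mod_cast even_iff_two_dvd.mpr ((dvd_pow_self 2 k.succ.succ_ne_zero).trans hk)
  have even_s {s : ℕ} (hs : TwoPowExactDvd (k + 1) s) : Even s :=
    even_iff_two_dvd.mpr ((dvd_pow_self 2 k.succ_ne_zero).trans hs.1)
  have hr1b := hr.2
  rcases inSomeOrder_of_kpair (hrq ▸ hq) with ⟨-, -, h, -⟩ | ⟨hr2, hr1, h⟩ | h | h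
  · exact absurd rfl h.ne_zero
  · rw [show r = (r.1, 0) from Prod.ext rfl hr2]
    simp only [InSomeOrder] at h
    rcases h with ⟨h5s, hks, -⟩ | ⟨h5s, hks, -⟩
    · have := even_iff_two_dvd.mp (even_s hks)
      exact ⟨0, by omega, depthLE_zero_of_odd (Nat.odd_iff.mpr (by omega)) (by omega)⟩
    · refine ⟨k + 1, by omega, depthLE_of_five_dvd h5 hk (Or.inl ⟨by omega, dvd_zero 5, ?_⟩)⟩
      simpa [Nat.sub_sub_self (by omega : r.1 ≤ b)] using hks.sub hk (Nat.sub_le b r.1)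
  · rcases h with ⟨-, hks, -⟩ | ⟨-, hks, -⟩
    · exact (even_fold_sub_one_iff.mp (even_s hks) hb2).elim
    · exact (even_fold_add_one_iff.mp (even_s hks) hb2).elim
  · cases w with
    | zero =>
      have h2 (c : ℕ) : 2 ^ (0 + 1) ∣ fold b c := even_iff_two_dvd.mp (even_fold_iff.mpr hb2)
      rcases h with ⟨-, -, -, h⟩ | ⟨-, -, -, h⟩ <;> exact absurd (h2 _) h.2
    | succ w =>
      refine ⟨k + 1, by omega, ih (w := w) ((pow_dvd_pow 2 k.succ.le_succ).trans hk) (by omega)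
        (h.of_map fun a c ⟨h5a, hka, h5c, hwc⟩ => ⟨?_, ?_, ?_, ?_⟩)⟩
      · exact (dvd_fold_iff_of_odd (by decide) h5).mp h5a
      · exact (twoPowExactDvd_fold_iff hk).mp hka
      · exact fun h => h5c ((dvd_fold_iff_of_odd (by decide) h5).mpr h)
      · exact (twoPowExactDvd_fold_iff ((pow_dvd_pow 2 (by omega)).trans hk)).mp hwc

theorem depthLE_of_not_two_pow_dvd {b n x : ℕ} (h5 : 5 ∣ b) (hb : TwoPowExactDvd n b)
    (hx1 : 1 ≤ x) (hnd : ¬ 2 ^ n ∣ x) :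
    DepthLE (Kpair b) {p | IsDiffPair b p} (x, 0) (n + 1) := by
  obtain ⟨k, rfl⟩ : ∃ k, n = k + 1 :=
    Nat.exists_eq_add_one.mpr (Nat.pos_of_ne_zero (by rintro rfl; exact hnd (one_dvd x)))
  refine depthLE_of_forall_preimage (mapsTo_kpair b) fun r hr hrx => ?_
  have hq : InSomeOrder (fun a c => a = 0 ∧ c = x) (Kpair b r) := Or.inr (by simp [hrx])
  have hb2 : Even (b : ℤ) := by
    exact_mod_cast even_iff_two_dvd.mpr ((dvd_pow_self 2 k.succ_ne_zero).trans hb.1)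
  have hb0 := hb.ne_zero
  have hr1b := hr.2
  rcases inSomeOrder_of_kpair hq with ⟨-, -, rfl⟩ | ⟨hr2, hr1, h⟩ | h | h
  · omega
  · simp only [InSomeOrder] at h
    have hr' : r = (1, 0) := Prod.ext (by omega) hr2
    exact ⟨0, by omega, hr' ▸ depthLE_zero_of_odd odd_one (by omega)⟩
  · simp only [InSomeOrder] at h
    rcases h with ⟨h0, -⟩ | ⟨h0, -⟩
    · exact (even_fold_sub_one_iff.mp (h0 ▸ Even.zero) hb2).elim
    · exact (even_fold_add_one_iff.mp (h0 ▸ Even.zero) hb2).elim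
  · have half (a : ℕ) (ha : fold b a = 0) : 5 ∣ a ∧ TwoPowExactDvd k a := by
      have h2a : 2 * a = b := by exact_mod_cast fold_eq_zero_iff.mp ha
      exact ⟨by omega, twoPowExactDvd_succ_two_mul_iff.mp (h2a ▸ hb)⟩
    by_cases h5x : 5 ∣ x
    · refine ⟨k, by omega, depthLE_of_five_dvd h5 hb.1
        (h.of_map fun a c ⟨ha, hc⟩ => ⟨(half a ha).1, ?_, (half a ha).2⟩)⟩
      exact (dvd_fold_iff_of_odd (by decide) h5).mp (hc ▸ h5x)
    obtain ⟨j, hj⟩ := exists_twoPowExactDvd (by omega : x ≠ 0)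
    have hjk : j < k + 1 := by
      by_contra! hkj
      exact hnd ((pow_dvd_pow 2 hkj).trans hj.1)
    have hx2 : 2 ∣ x := by
      rcases h with ⟨-, rfl⟩ | ⟨-, rfl⟩ <;> exact even_iff_two_dvd.mp (even_fold_iff.mpr hb2)
    obtain ⟨j, rfl⟩ : ∃ j', j = j' + 1 :=
      Nat.exists_eq_add_one.mpr (Nat.pos_of_ne_zero (by rintro rfl; exact hj.2 hx2))
    refine ⟨k + 1, by omega, depthLE_of_five_dvd_not_five_dvd (w := j) h5 hb.1 (by omega)
      (h.of_map fun a c ⟨ha, hc⟩ => ⟨(half a ha).1, (half a ha).2, fun h => ?_, ?_⟩)⟩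
    · exact h5x (hc ▸ (dvd_fold_iff_of_odd (by decide) h5).mpr h)
    · exact (twoPowExactDvd_fold_iff ((pow_dvd_pow 2 (by omega)).trans hb.1)).mp (hc ▸ hj)

theorem kaprekar_above_type_c_general (n b x u v L : ℕ)
    (hb : b = 5 * 2 ^ n) (hx1 : 1 ≤ x) (hnd : ¬ 2 ^ n ∣ x)
    (huv : IsDiffPair b (u, v)) (hK : (Kpair b)^[L] (u, v) = (x, 0)) :
    L ≤ n + 1 := by
  subst hb
  have hb : TwoPowExactDvd n (5 * 2 ^ n) :=
    mul_comm (2 ^ n) 5 ▸ twoPowExactDvd_two_pow_mul (by decide)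
  exact depthLE_of_not_two_pow_dvd (dvd_mul_right 5 _) hb hx1 hnd (u, v) huv L hK

/-- chains above a type-(c) pair `(x, 0)` with `2^n ∤ x` have
length at most `n + 1` when `b = 5·2^n`. -/
theorem kaprekar_above_type_c (n b x u v L : ℕ) (hn : 2 ≤ n)
    (hb : b = 5 * 2 ^ n) (hx1 : 1 ≤ x) (hx : x ≤ b - 1) (hnd : ¬ 2 ^ n ∣ x)
    (huv : IsDiffPair b (u, v)) (hK : (Kpair b)^[L] (u, v) = (x, 0)) :
    L ≤ n + 1 :=
  kaprekar_above_type_c_general n b x u v L hb hx1 hnd huv hK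
end
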